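/- arXiv:1411.3832 — 14 statements merged into one kernel-verified Lean document; each statement's English description precedes it below -/
import Mathlib

section
/- Let B be a set of subsets of a fixed set, partially ordered by inclusion, and let X₁, X₂ ∈ B with X₁ ⊊ X₂. Then there exist immediate neighbors in B between X₁ and X₂ (i.e., there exist Y₁, Y₂ ∈ B such that X₁ ⊆ Y₁ ⊊ Y₂ ⊆ X₂ and there is no Z ∈ B with Y₁ ⊊ Z ⊊ Y₂) if and only if there exist an element y ∈ X₂ \ X₁ and a maximal chain C ⊆ B between X₁ and X₂ such that ⋃{X ∈ C | y ∉ X} ∈ B and ⋂{X ∈ C | y ∈ X} ∈ B. -/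
/-- `X` and `Y` are immediate neighbors in `B` (ordered by inclusion):
both belong to `B`, `X ⊊ Y`, and no member of `B` lies strictly between them. -/
def ImmNbr {α : Type*} (B : Set (Set α)) (X Y : Set α) : Prop :=
  X ∈ B ∧ Y ∈ B ∧ X ⊂ Y ∧ ¬∃ Z ∈ B, X ⊂ Z ∧ Z ⊂ Y

/-- A maximal chain in `B` between `X₁` and `X₂`: a chain contained in `B`, with
least element `X₁` and greatest element `X₂`, such that no element of `B` strictly
between `X₁` and `X₂` and outside `C` can be inserted keeping it a chain. -/
def MaxChainBetween {α : Type*} (B : Set (Set α)) (X₁ X₂ : Set α) (C : Set (Set α)) : Prop :=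
  C ⊆ B ∧ IsChain (· ⊆ ·) C ∧ X₁ ∈ C ∧ X₂ ∈ C ∧
  (∀ Z ∈ C, X₁ ⊆ Z ∧ Z ⊆ X₂) ∧
  ∀ Z ∈ B, Z ∉ C → X₁ ⊂ Z → Z ⊂ X₂ → ¬IsChain (· ⊆ ·) (insert Z C)

theorem stmt0 {α : Type*} (B : Set (Set α)) {X₁ X₂ : Set α}
    (hX₁ : X₁ ∈ B) (hX₂ : X₂ ∈ B) (h : X₁ ⊂ X₂) :
    (∃ Y₁ Y₂, ImmNbr B Y₁ Y₂ ∧ X₁ ⊆ Y₁ ∧ Y₂ ⊆ X₂) ↔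
      ∃ y ∈ X₂ \ X₁, ∃ C, MaxChainBetween B X₁ X₂ C ∧
        (⋃₀ {X ∈ C | y ∉ X}) ∈ B ∧ (⋂₀ {X ∈ C | y ∈ X}) ∈ B := by
  constructor
  · rintro ⟨Y₁, Y₂, ⟨hY₁B, hY₂B, hY₁Y₂, hno⟩, hXY₁, hY₂X⟩
    obtain ⟨y, hyY₂, hyY₁⟩ := Set.exists_of_ssubset hY₁Y₂
    have hyX₂ : y ∈ X₂ := hY₂X hyY₂
    have hyX₁ : y ∉ X₁ := fun hy => hyY₁ (hXY₁ hy)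
    -- set up the subtype of elements of B between X₁ and X₂
    set β := {Z : Set α // Z ∈ B ∧ X₁ ⊆ Z ∧ Z ⊆ X₂} with hβ
    let r : β → β → Prop := fun a b => a.1 ⊆ b.1
    have hY₁Y₂' : Y₁ ⊆ Y₂ := hY₁Y₂.1
    let e₁ : β := ⟨X₁, hX₁, subset_rfl, h.1⟩
    let eY₁ : β := ⟨Y₁, hY₁B, hXY₁, hY₁Y₂'.trans hY₂X⟩
    let eY₂ : β := ⟨Y₂, hY₂B, hXY₁.trans hY₁Y₂', hY₂X⟩
    let e₂ : β := ⟨X₂, hX₂, h.1, subset_rfl⟩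
    let s : Set β := {a | a.1 ∈ ({X₁, Y₁, Y₂, X₂} : Set (Set α))}
    have h12 : X₁ ⊆ Y₁ := hXY₁
    have h13 : X₁ ⊆ Y₂ := hXY₁.trans hY₁Y₂'
    have h14 : X₁ ⊆ X₂ := h.1
    have h23 : Y₁ ⊆ Y₂ := hY₁Y₂'
    have h24 : Y₁ ⊆ X₂ := hY₁Y₂'.trans hY₂X
    have h34 : Y₂ ⊆ X₂ := hY₂X
    have hchain4 : IsChain (· ⊆ ·) ({X₁, Y₁, Y₂, X₂} : Set (Set α)) := by
      intro a ha b hb hne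
      simp only [Set.mem_insert_iff, Set.mem_singleton_iff] at ha hb
      rcases ha with rfl | rfl | rfl | rfl <;> rcases hb with rfl | rfl | rfl | rfl <;>
        first
          | exact absurd rfl hne
          | tauto
    have hs : IsChain r s := by
      intro a ha b hb hne
      exact hchain4 ha hb (fun hv => hne (Subtype.ext hv))
    obtain ⟨t, ht, hst⟩ := hs.exists_maxChain
    set C : Set (Set α) := Subtype.val '' t with hC
    have hmemC : ∀ a : β, a ∈ t → a.1 ∈ C := fun a ha => ⟨a, ha, rfl⟩
    have hX₁C : X₁ ∈ C := hmemC e₁ (hst (by simp [s, e₁]))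
    have hY₁C : Y₁ ∈ C := hmemC eY₁ (hst (by simp [s, eY₁]))
    have hY₂C : Y₂ ∈ C := hmemC eY₂ (hst (by simp [s, eY₂]))
    have hX₂C : X₂ ∈ C := hmemC e₂ (hst (by simp [s, e₂]))
    have hCB : C ⊆ B := by rintro _ ⟨a, _, rfl⟩; exact a.2.1
    have hCchain : IsChain (· ⊆ ·) C := by
      rintro _ ⟨a, ha, rfl⟩ _ ⟨b, hb, rfl⟩ hne
      exact ht.1 ha hb (fun hv => hne (congrArg Subtype.val hv))
    have hbetween : ∀ Z ∈ C, X₁ ⊆ Z ∧ Z ⊆ X₂ := by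
      rintro _ ⟨a, _, rfl⟩; exact ⟨a.2.2.1, a.2.2.2⟩
    -- maximality
    have hmax : ∀ Z ∈ B, Z ∉ C → X₁ ⊂ Z → Z ⊂ X₂ → ¬IsChain (· ⊆ ·) (insert Z C) := by
      intro Z hZB hZC hZ1 hZ2 hins
      let eZ : β := ⟨Z, hZB, hZ1.1, hZ2.1⟩
      have hins' : IsChain r (insert eZ t) := by
        refine ht.1.insert (fun b hb hne => ?_)
        by_cases hvb : Z = b.1
        · exact Or.inl (by simp only [r]; exact hvb ▸ subset_rfl)
        · exact hins (Set.mem_insert _ _) (Set.mem_insert_of_mem _ (hmemC b hb)) hvb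
      have := ht.2 hins' (Set.subset_insert _ _)
      have heZ : eZ ∈ t := this ▸ Set.mem_insert _ _
      exact hZC (hmemC eZ heZ)
    -- the union and intersection are Y₁ and Y₂
    have hkey₁ : ∀ X ∈ C, y ∉ X → X ⊆ Y₁ := by
      intro X hXC hyX
      by_cases hXY : X = Y₁
      · exact hXY ▸ subset_rfl
      rcases hCchain hXC hY₁C hXY with hsub | hsub
      · exact hsub
      · exfalso
        have hXY₂ : X ⊆ Y₂ := by
          by_cases hXY2 : X = Y₂
          · exact hXY2 ▸ subset_rfl
          rcases hCchain hXC hY₂C hXY2 with hsub2 | hsub2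
          · exact hsub2
          · exact absurd (hsub2 hyY₂) hyX
        exact hno ⟨X, hCB hXC, ⟨hsub, fun hc => hXY (subset_antisymm hc hsub)⟩,
          ⟨hXY₂, fun hc => hyX (hc hyY₂)⟩⟩
    have hkey₂ : ∀ X ∈ C, y ∈ X → Y₂ ⊆ X := by
      intro X hXC hyX
      by_cases hXY : X = Y₂
      · exact hXY ▸ subset_rfl
      rcases hCchain hXC hY₂C hXY with hsub | hsub
      · exfalso
        have hY₁X : Y₁ ⊆ X := by
          by_cases hXY1 : X = Y₁
          · exact hXY1 ▸ subset_rfl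
          rcases hCchain hXC hY₁C hXY1 with hsub1 | hsub1
          · exact absurd (hsub1 hyX) hyY₁
          · exact hsub1
        exact hno ⟨X, hCB hXC, ⟨hY₁X, fun hc => hyY₁ (hc hyX)⟩, ⟨hsub, fun hc => hXY (subset_antisymm hsub hc)⟩⟩
      · exact hsub
    have hU : (⋃₀ {X ∈ C | y ∉ X}) = Y₁ := by
      apply subset_antisymm
      · exact Set.sUnion_subset (fun X ⟨hXC, hyX⟩ => hkey₁ X hXC hyX)
      · exact Set.subset_sUnion_of_mem ⟨hY₁C, hyY₁⟩
    have hI : (⋂₀ {X ∈ C | y ∈ X}) = Y₂ := by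
      apply subset_antisymm
      · exact Set.sInter_subset_of_mem ⟨hY₂C, hyY₂⟩
      · exact Set.subset_sInter (fun X ⟨hXC, hyX⟩ => hkey₂ X hXC hyX)
    exact ⟨y, ⟨hyX₂, hyX₁⟩, C, ⟨hCB, hCchain, hX₁C, hX₂C, hbetween, hmax⟩,
      hU ▸ hY₁B, hI ▸ hY₂B⟩
  · rintro ⟨y, ⟨hyX₂, hyX₁⟩, C, ⟨hCB, hCchain, hX₁C, hX₂C, hbetween, hmax⟩, hUB, hIB⟩
    set U := ⋃₀ {X ∈ C | y ∉ X} with hU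
    set I := ⋂₀ {X ∈ C | y ∈ X} with hI
    have hcross : ∀ X ∈ C, y ∉ X → ∀ X' ∈ C, y ∈ X' → X ⊆ X' := by
      intro X hX hyX X' hX' hyX'
      by_cases hne : X = X'
      · exact absurd (hne ▸ hyX') hyX
      rcases hCchain hX hX' hne with hsub | hsub
      · exact hsub
      · exact absurd (hsub hyX') hyX
    have hUsubI : U ⊆ I := by
      refine Set.sUnion_subset (fun X ⟨hX, hyX⟩ => Set.subset_sInter ?_)
      exact fun X' ⟨hX', hyX'⟩ => hcross X hX hyX X' hX' hyX'
    have hyI : y ∈ I := Set.mem_sInter.2 (fun X ⟨_, hyX⟩ => hyX)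
    have hyU : y ∉ U := by
      intro hmem
      rw [hU, Set.mem_sUnion] at hmem
      obtain ⟨X, hXmem, hy⟩ := hmem
      exact hXmem.2 hy
    have hX₁U : X₁ ⊆ U := Set.subset_sUnion_of_mem ⟨hX₁C, hyX₁⟩
    have hIX₂ : I ⊆ X₂ := Set.sInter_subset_of_mem ⟨hX₂C, hyX₂⟩
    have hUI : U ⊂ I := ⟨hUsubI, fun hc => hyU (hc hyI)⟩
    refine ⟨U, I, ⟨hUB, hIB, hUI, ?_⟩, hX₁U, hIX₂⟩
    rintro ⟨Z, hZB, hUZ, hZI⟩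
    have hZC : Z ∉ C := by
      intro hZC
      by_cases hyZ : y ∈ Z
      · exact hZI.2 (Set.sInter_subset_of_mem ⟨hZC, hyZ⟩)
      · exact hUZ.2 (Set.subset_sUnion_of_mem ⟨hZC, hyZ⟩)
    have hX₁Z : X₁ ⊂ Z := lt_of_le_of_lt hX₁U hUZ
    have hZX₂ : Z ⊂ X₂ := lt_of_lt_of_le hZI hIX₂
    refine hmax Z hZB hZC hX₁Z hZX₂ ?_
    refine hCchain.insert (fun W hW hne => ?_)
    by_cases hyW : y ∈ W
    · exact Or.inl (hZI.1.trans (Set.sInter_subset_of_mem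
        (show W ∈ {X ∈ C | y ∈ X} from ⟨hW, hyW⟩)))
    · exact Or.inr ((Set.subset_sUnion_of_mem
        (show W ∈ {X ∈ C | y ∉ X} from ⟨hW, hyW⟩)).trans hUZ.1)
end

section
/- Let B be a set of subsets of a fixed set, partially ordered by inclusion. If for every nonempty chain C ⊆ B one has ⋃_{X ∈ C} X ∈ B and ⋂_{X ∈ C} X ∈ B, then B satisfies (K2). -/
/-- `B` satisfies (K2): between any two strictly comparable members of `B`
there exist immediate neighbors in `B`. -/
def K2Sets {α : Type*} (B : Set (Set α)) : Prop :=
  ∀ a ∈ B, ∀ b ∈ B, a ⊂ b → ∃ c d, ImmNbr B c d ∧ a ⊆ c ∧ d ⊆ b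

theorem stmt1 {α : Type*} (B : Set (Set α))
    (h : ∀ C ⊆ B, C.Nonempty → IsChain (· ⊆ ·) C → ⋃₀ C ∈ B ∧ ⋂₀ C ∈ B) :
    K2Sets B := by
  intro a ha b hb hab
  obtain ⟨p, hpb, hpa⟩ : ∃ p, p ∈ b ∧ p ∉ a := Set.exists_of_ssubset hab
  -- maximal element of S
  set S : Set (Set α) := {X | X ∈ B ∧ a ⊆ X ∧ X ⊆ b ∧ p ∉ X} with hS
  have hSsub : S ⊆ B := fun X hX => hX.1
  obtain ⟨c, hac, hcS, hcmax⟩ := zorn_subset_nonempty S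
    (fun C hCS hC hCne => by
      refine ⟨⋃₀ C, ⟨(h C (hCS.trans hSsub) hCne hC).1, ?_, ?_, ?_⟩,
        fun s hs => Set.subset_sUnion_of_mem hs⟩
      · obtain ⟨X, hX⟩ := hCne
        exact (hCS hX).2.1.trans (Set.subset_sUnion_of_mem hX)
      · exact Set.sUnion_subset fun X hX => (hCS hX).2.2.1
      · rintro ⟨X, hX, hpX⟩
        exact (hCS hX).2.2.2 hpX)
    a ⟨ha, subset_rfl, hab.1, hpa⟩
  obtain ⟨hcB, hacs, hcb, hpc⟩ := hcS
  -- minimal element of T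
  set T : Set (Set α) := {X | X ∈ B ∧ c ⊆ X ∧ X ⊆ b ∧ p ∈ X} with hT
  have hTsub : T ⊆ B := fun X hX => hX.1
  obtain ⟨d, hdb', hdT, hdmin⟩ := zorn_superset_nonempty T
    (fun C hCT hC hCne => by
      refine ⟨⋂₀ C, ⟨(h C (hCT.trans hTsub) hCne hC).2, ?_, ?_, ?_⟩,
        fun s hs => Set.sInter_subset_of_mem hs⟩
      · exact Set.subset_sInter fun X hX => (hCT hX).2.1
      · obtain ⟨X, hX⟩ := hCne
        exact (Set.sInter_subset_of_mem hX).trans (hCT hX).2.2.1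
      · exact fun X hX => (hCT hX).2.2.2)
    b ⟨hb, hcb, subset_rfl, hpb⟩
  obtain ⟨hdB, hcd, hdb, hpd⟩ := hdT
  refine ⟨c, d, ⟨hcB, hdB, ⟨hcd, fun hdc => hpc (hdc hpd)⟩, ?_⟩, hacs, hdb⟩
  rintro ⟨Z, hZB, hcZ, hZd⟩
  by_cases hpZ : p ∈ Z
  · exact hZd.2 (hdmin ⟨hZB, hcZ.1, hZd.1.trans hdb, hpZ⟩ hZd.1)
  · exact hcZ.2 (hcmax ⟨hZB, hacs.trans hcZ.1, (hZd.1.trans hdb), hpZ⟩ hcZ.1)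
end

section
/- Let B be a set of subsets of a fixed set, partially ordered by inclusion. Assume that B satisfies (K2) and that for every nonempty chain C ⊆ IS(B), ⋃_{Z ∈ C} Z ∈ B. Let X ∈ B be a non-minimal element of B (i.e., there exists Z ∈ B with Z ⊊ X). Then the set I = {Y ∈ IS(B) | Y ⊆ X} is a nonempty initial (lower) subset of IS(B) satisfying X = ⋃_{Y ∈ I} Y; moreover, every subset J ⊆ IS(B) with X = ⋃_{Y ∈ J} Y satisfies J ⊆ I, so I is the unique maximal nonempty initial subset of IS(B) whose union is X. -/
/-- `ISet B` is the set of members of `B` having an immediate predecessor in `B`. -/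
def ISet {α : Type*} (B : Set (Set α)) : Set (Set α) := {Y | ∃ X, ImmNbr B X Y}

theorem stmt2 {α : Type*} (B : Set (Set α)) (hK2 : K2Sets B)
    (hU : ∀ C ⊆ ISet B, C.Nonempty → IsChain (· ⊆ ·) C → ⋃₀ C ∈ B)
    {X : Set α} (hX : X ∈ B) (hnonmin : ∃ Z ∈ B, Z ⊂ X) :
    ({Y ∈ ISet B | Y ⊆ X}).Nonempty ∧
    (∀ Y ∈ {Y ∈ ISet B | Y ⊆ X}, ∀ Y' ∈ ISet B, Y' ⊆ Y → Y' ∈ {Y ∈ ISet B | Y ⊆ X}) ∧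
    X = ⋃₀ {Y ∈ ISet B | Y ⊆ X} ∧
    ∀ J ⊆ ISet B, X = ⋃₀ J → J ⊆ {Y ∈ ISet B | Y ⊆ X} := by
  set I := {Y ∈ ISet B | Y ⊆ X} with hI
  -- nonempty
  obtain ⟨Z, hZB, hZX⟩ := hnonmin
  obtain ⟨c, d, hcd, _, hdX⟩ := hK2 Z hZB X hX hZX
  have hne : I.Nonempty := ⟨d, ⟨c, hcd⟩, hdX⟩
  refine ⟨hne, fun Y hY Y' hY' hsub => ⟨hY', hsub.trans hY.2⟩, ?_, ?_⟩
  · -- the hard direction: X = ⋃₀ I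
    -- take a maximal chain in I
    obtain ⟨Y0, hY0⟩ := hne
    set S : Set (Set (Set α)) := {C | C ⊆ I ∧ Y0 ∈ C ∧ IsChain (· ⊆ ·) C} with hS
    have hzorn : ∀ c ⊆ S, IsChain (· ⊆ ·) c → c.Nonempty →
        ∃ ub ∈ S, ∀ s ∈ c, s ⊆ ub := by
      intro c hcS hcchain hcne
      refine ⟨⋃₀ c, ⟨?_, ?_, ?_⟩, fun s hs => Set.subset_sUnion_of_mem hs⟩
      · exact Set.sUnion_subset fun s hs => (hcS hs).1
      · obtain ⟨s, hs⟩ := hcne; exact ⟨s, hs, (hcS hs).2.1⟩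
      · intro a ha b hb hab
        obtain ⟨sa, hsa, hasa⟩ := ha
        obtain ⟨sb, hsb, hbsb⟩ := hb
        rcases eq_or_ne sa sb with rfl | hne
        · exact (hcS hsa).2.2 hasa hbsb hab
        · rcases hcchain hsa hsb hne with h | h
          · exact (hcS hsb).2.2 (h hasa) hbsb hab
          · exact (hcS hsa).2.2 hasa (h hbsb) hab
    obtain ⟨M, -, hMS, hMmax⟩ := zorn_subset_nonempty S hzorn {Y0} ⟨by
        intro x hx; rw [Set.mem_singleton_iff] at hx; subst hx; exact hY0,
        rfl, Set.Subsingleton.isChain (Set.subsingleton_singleton)⟩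
    obtain ⟨hMI, hY0M, hMchain⟩ := hMS
    have hMIS : M ⊆ ISet B := fun x hx => (hMI hx).1
    have hUM : ⋃₀ M ∈ B := hU M hMIS ⟨Y0, hY0M⟩ hMchain
    have hUMX : ⋃₀ M ⊆ X := Set.sUnion_subset fun x hx => (hMI hx).2
    have hUMeq : ⋃₀ M = X := by
      by_contra hneq
      have hlt : ⋃₀ M ⊂ X := ⟨hUMX, fun h => hneq (le_antisymm hUMX h)⟩
      obtain ⟨c, d, hcd, hUc, hdX⟩ := hK2 _ hUM X hX hlt
      have hdI : d ∈ I := ⟨⟨c, hcd⟩, hdX⟩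
      have hdM : ∀ x ∈ M, x ⊆ d := fun x hx =>
        (Set.subset_sUnion_of_mem hx).trans (hUc.trans hcd.2.2.1.1)
      have hnew : insert d M ∈ S := by
        refine ⟨Set.insert_subset hdI hMI, Set.mem_insert_of_mem _ hY0M, ?_⟩
        exact hMchain.insert (fun x hx _ => Or.inr (hdM x hx))
      have hsub : insert d M ⊆ M := hMmax hnew (Set.subset_insert _ _)
      have hdmem : d ∈ M := hsub (Set.mem_insert d M)
      have : d ⊆ ⋃₀ M := Set.subset_sUnion_of_mem hdmem
      exact hcd.2.2.1.2 (this.trans hUc)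
    apply le_antisymm
    · rw [← hUMeq]; exact Set.sUnion_mono hMI
    · exact Set.sUnion_subset fun x hx => hx.2
  · intro J hJ hXJ Y hYJ
    exact ⟨hJ hYJ, hXJ ▸ Set.subset_sUnion_of_mem hYJ⟩
end

section
/- Let B be a set of subsets of a fixed set, partially ordered by inclusion. Assume that B satisfies (K2) and that for every nonempty chain C ⊆ IS(B), ⋃_{Z ∈ C} Z ∈ B. Let X ∈ B be a non-minimal element of B, and let I = {Y ∈ IS(B) | Y ⊆ X}. Then X = ⋃_{Y ∈ E} Y for every maximal chain E contained in I. -/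
theorem stmt3 {α : Type*} (B : Set (Set α)) (hK2 : K2Sets B)
    (hU : ∀ C ⊆ ISet B, C.Nonempty → IsChain (· ⊆ ·) C → ⋃₀ C ∈ B)
    {X : Set α} (hX : X ∈ B) (hnonmin : ∃ Z ∈ B, Z ⊂ X)
    (E : Set (Set α)) (hE : E ⊆ {Y ∈ ISet B | Y ⊆ X}) (hchain : IsChain (· ⊆ ·) E)
    (hmax : ∀ Z ∈ {Y ∈ ISet B | Y ⊆ X}, Z ∉ E → ¬IsChain (· ⊆ ·) (insert Z E)) :
    X = ⋃₀ E := by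
  have hEsub : E ⊆ ISet B := fun Y hY => (hE hY).1
  have hEX : ∀ Y ∈ E, Y ⊆ X := fun Y hY => (hE hY).2
  have hEne : E.Nonempty := by
    by_contra h
    rw [Set.not_nonempty_iff_eq_empty] at h
    obtain ⟨Z, hZB, hZX⟩ := hnonmin
    obtain ⟨c, d, hcd, hZc, hdX⟩ := hK2 Z hZB X hX hZX
    have hdI : d ∈ {Y ∈ ISet B | Y ⊆ X} := ⟨⟨c, hcd⟩, hdX⟩
    have hdE : d ∉ E := by simp [h]
    apply hmax d hdI hdE
    rw [h]
    intro a ha b hb hab; simp_all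
  have hUB : ⋃₀ E ∈ B := hU E hEsub hEne hchain
  have hUX : ⋃₀ E ⊆ X := Set.sUnion_subset hEX
  by_contra hne
  have hss : ⋃₀ E ⊂ X := hUX.ssubset_of_ne (fun h => hne h.symm)
  obtain ⟨c, d, hcd, hUc, hdX⟩ := hK2 _ hUB X hX hss
  have hdI : d ∈ {Y ∈ ISet B | Y ⊆ X} := ⟨⟨c, hcd⟩, hdX⟩
  have hcd' : c ⊂ d := hcd.2.2.1
  have hdE : d ∉ E := by
    intro hd
    exact hcd'.not_subset ((Set.subset_sUnion_of_mem hd).trans hUc)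
  exact hmax d hdI hdE (hchain.insert fun Y hY _ =>
    Or.inr (((Set.subset_sUnion_of_mem hY).trans hUc).trans hcd'.subset))
end

section
/- Let B be a set of subsets of a fixed set, partially ordered by inclusion. Assume that B satisfies (K2) and that for every nonempty chain C ⊆ IP(B), ⋂_{Z ∈ C} Z ∈ B. Let X ∈ B be a non-maximal element of B (i.e., there exists Z ∈ B with X ⊊ Z). Then the set J = {Y ∈ IP(B) | X ⊆ Y} is a nonempty final (upper) subset of IP(B) satisfying X = ⋂_{Y ∈ J} Y; every subset J' ⊆ IP(B) with X = ⋂_{Y ∈ J'} Y satisfies J' ⊆ J (so J is the unique maximal such final subset); furthermore, X = ⋂_{Y ∈ E} Y for every maximal chain E contained in J. -/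
/-- `IPSet B` is the set of members of `B` having an immediate successor in `B`. -/
def IPSet {α : Type*} (B : Set (Set α)) : Set (Set α) := {X | ∃ Y, ImmNbr B X Y}

theorem stmt4 {α : Type*} (B : Set (Set α)) (hK2 : K2Sets B)
    (hI : ∀ C ⊆ IPSet B, C.Nonempty → IsChain (· ⊆ ·) C → ⋂₀ C ∈ B)
    {X : Set α} (hX : X ∈ B) (hnonmax : ∃ Z ∈ B, X ⊂ Z) :
    ({Y ∈ IPSet B | X ⊆ Y}).Nonempty ∧
    (∀ Y ∈ {Y ∈ IPSet B | X ⊆ Y}, ∀ Y' ∈ IPSet B, Y ⊆ Y' → Y' ∈ {Y ∈ IPSet B | X ⊆ Y}) ∧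
    X = ⋂₀ {Y ∈ IPSet B | X ⊆ Y} ∧
    (∀ J' ⊆ IPSet B, X = ⋂₀ J' → J' ⊆ {Y ∈ IPSet B | X ⊆ Y}) ∧
    ∀ E ⊆ {Y ∈ IPSet B | X ⊆ Y}, IsChain (· ⊆ ·) E →
      (∀ Z ∈ {Y ∈ IPSet B | X ⊆ Y}, Z ∉ E → ¬IsChain (· ⊆ ·) (insert Z E)) →
      X = ⋂₀ E := by
  classical
  obtain ⟨Z0, hZ0B, hXZ0⟩ := hnonmax
  obtain ⟨c0, d0, hcd0, hXc0, _⟩ := hK2 X hX Z0 hZ0B hXZ0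
  set J := {Y ∈ IPSet B | X ⊆ Y} with hJdef
  have hc0J : c0 ∈ J := ⟨⟨d0, hcd0⟩, hXc0⟩
  have hJIP : J ⊆ IPSet B := Set.sep_subset _ _
  -- key lemma: maximal chains in J intersect to X
  have key : ∀ E ⊆ J, IsChain (· ⊆ ·) E →
      (∀ Z ∈ J, Z ∉ E → ¬IsChain (· ⊆ ·) (insert Z E)) → X = ⋂₀ E := by
    intro E hEJ hEc hmax
    have hEne : E.Nonempty := by
      by_contra h
      rw [Set.not_nonempty_iff_eq_empty] at h
      subst h
      exact hmax c0 hc0J (by simp) (by simp)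
    have hWB : ⋂₀ E ∈ B := hI E (hEJ.trans hJIP) hEne hEc
    have hXW : X ⊆ ⋂₀ E := Set.subset_sInter fun Y hY => (hEJ hY).2
    by_contra hne
    have hss : X ⊂ ⋂₀ E := hXW.ssubset_of_ne hne
    obtain ⟨c, d, hcd, hXc, hdW⟩ := hK2 X hX _ hWB hss
    have hcJ : c ∈ J := ⟨⟨d, hcd⟩, hXc⟩
    have hcE : ∀ Y ∈ E, c ⊆ Y := fun Y hY =>
      (hcd.2.2.1.subset.trans hdW).trans (Set.sInter_subset_of_mem hY)
    have hcnot : c ∉ E := by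
      intro hmem
      exact (hcd.2.2.1.trans_subset (hdW.trans (Set.sInter_subset_of_mem hmem))).false
    refine hmax c hcJ hcnot ?_
    intro a ha b hb hab
    rcases ha with rfl | ha
    · rcases hb with rfl | hb
      · exact absurd rfl hab
      · exact Or.inl (hcE b hb)
    · rcases hb with rfl | hb
      · exact Or.inr (hcE a ha)
      · exact hEc ha hb hab
  -- a maximal chain exists via Zorn
  obtain ⟨E, _, hEmax⟩ := zorn_subset_nonempty {E | E ⊆ J ∧ IsChain (· ⊆ ·) E}
    (fun c hcS hchain hcne => by
      refine ⟨⋃₀ c, ⟨?_, ?_⟩, fun s hs => Set.subset_sUnion_of_mem hs⟩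
      · exact Set.sUnion_subset fun s hs => (hcS hs).1
      · intro a ha b hb hab
        obtain ⟨s, hs, has⟩ := ha
        obtain ⟨t, ht, hbt⟩ := hb
        rcases hchain.total hs ht with hst | hts
        · exact (hcS ht).2 (hst has) hbt hab
        · exact (hcS hs).2 has (hts hbt) hab) {c0} ⟨Set.singleton_subset_iff.2 hc0J, Set.subsingleton_singleton.isChain⟩
  have hEJ : E ⊆ J := hEmax.prop.1
  have hEchain : IsChain (· ⊆ ·) E := hEmax.prop.2
  have hEmaxchain : ∀ Z ∈ J, Z ∉ E → ¬IsChain (· ⊆ ·) (insert Z E) := by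
    intro Z hZJ hZE hch
    exact hZE (hEmax.2 ⟨Set.insert_subset hZJ hEJ, hch⟩ (Set.subset_insert _ _)
      (Set.mem_insert _ _))
  have hXE := key E hEJ hEchain hEmaxchain
  have hXJ : X = ⋂₀ J := by
    refine le_antisymm (Set.subset_sInter fun Y hY => hY.2) ?_
    calc ⋂₀ J ⊆ ⋂₀ E := Set.sInter_subset_sInter hEJ
    _ = X := hXE.symm
  refine ⟨⟨c0, hc0J⟩, ?_, hXJ, ?_, key⟩
  · intro Y hY Y' hY' hYY'
    exact ⟨hY', hY.2.trans hYY'⟩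
  · intro J' hJ' hXJ' Y hY
    exact ⟨hJ' hY, hXJ' ▸ Set.sInter_subset_of_mem hY⟩
end

section
/- Let B be a set of subsets of a fixed set that is totally ordered by inclusion and satisfies (K2). Assume that B has a smallest member and that for every nonempty chain C ⊆ IS(B), ⋃_{X ∈ C} X ∈ B. Then B is order-isomorphic to D(IS(B)) and to D(IP(B)). -/
section aux
variable {α : Type*} {B : Set (Set α)}

lemma chain_total (hchain : IsChain (· ⊆ ·) B) {X Y : Set α} (hX : X ∈ B) (hY : Y ∈ B) :
    X ⊆ Y ∨ Y ⊆ X := by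
  rcases eq_or_ne X Y with rfl | h
  · exact Or.inl le_rfl
  · exact hchain hX hY h

lemma succ_unique (hchain : IsChain (· ⊆ ·) B) {X Y Y' : Set α}
    (h : ImmNbr B X Y) (h' : ImmNbr B X Y') : Y = Y' := by
  by_contra hne
  rcases chain_total hchain h.2.1 h'.2.1 with hs | hs
  · exact h'.2.2.2 ⟨Y, h.2.1, h.2.2.1, hs.ssubset_of_ne hne⟩
  · exact h.2.2.2 ⟨Y', h'.2.1, h'.2.2.1, hs.ssubset_of_ne (Ne.symm hne)⟩

lemma pred_unique (hchain : IsChain (· ⊆ ·) B) {X X' Y : Set α}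
    (h : ImmNbr B X Y) (h' : ImmNbr B X' Y) : X = X' := by
  by_contra hne
  rcases chain_total hchain h.1 h'.1 with hs | hs
  · exact h.2.2.2 ⟨X', h'.1, hs.ssubset_of_ne hne, h'.2.2.1⟩
  · exact h'.2.2.2 ⟨X, h.1, hs.ssubset_of_ne (Ne.symm hne), h.2.2.1⟩

/-- the map B → LowerSet (ISet B). -/
def phi (B : Set (Set α)) (X : ↥B) : LowerSet ↥(ISet B) :=
  ⟨{Y | (Y : Set α) ⊆ (X : Set α)}, fun _ _ hle hY =>
    Set.mem_setOf.mpr (le_trans (Subtype.coe_le_coe.mpr hle) (Set.mem_setOf.mp hY))⟩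

lemma mem_phi {X : ↥B} {Y : ↥(ISet B)} : Y ∈ phi B X ↔ (Y : Set α) ⊆ (X : Set α) := Iff.rfl

lemma phi_le_iff (hchain : IsChain (· ⊆ ·) B) (hK2 : K2Sets B) (X X' : ↥B) :
    phi B X ≤ phi B X' ↔ X ≤ X' := by
  constructor
  · intro h
    by_contra hle
    have hss : (X' : Set α) ⊂ (X : Set α) := by
      rcases chain_total hchain X.2 X'.2 with hs | hs
      · exact absurd hs hle
      · exact hs.ssubset_of_ne (fun he => hle (le_of_eq (Subtype.ext he.symm)))
    obtain ⟨c, d, hcd, hc, hd⟩ := hK2 _ X'.2 _ X.2 hss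
    have hdI : d ∈ ISet B := ⟨c, hcd⟩
    have hmem : (⟨d, hdI⟩ : ↥(ISet B)) ∈ phi B X := mem_phi.mpr hd
    have hdX' : d ⊆ (X' : Set α) := mem_phi.mp (h hmem)
    exact (hcd.2.2.1.trans_subset (hdX'.trans hc)).ne rfl
  · intro h Y hY
    exact mem_phi.mpr (le_trans (mem_phi.mp hY) h)

lemma phi_surj (hchain : IsChain (· ⊆ ·) B)
    (hbot : ∃ X₀ ∈ B, ∀ X ∈ B, X₀ ⊆ X)
    (hU : ∀ C ⊆ ISet B, C.Nonempty → IsChain (· ⊆ ·) C → ⋃₀ C ∈ B) :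
    Function.Surjective (phi B) := by
  obtain ⟨X₀, hX₀B, hX₀⟩ := hbot
  intro L
  set C : Set (Set α) := Subtype.val '' (L : Set ↥(ISet B)) with hC
  have hCI : C ⊆ ISet B := by rintro Z ⟨z, _, rfl⟩; exact z.2
  have hCB : C ⊆ B := fun Z hZ => (hCI hZ).choose_spec.2.1
  rcases C.eq_empty_or_nonempty with hCe | hCne
  · refine ⟨⟨X₀, hX₀B⟩, ?_⟩
    apply le_antisymm
    · rintro ⟨Y, hYI⟩ hY
      exfalso
      obtain ⟨P, hP⟩ := hYI
      have hYX₀ : Y ⊆ X₀ := mem_phi.mp hY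
      exact (hP.2.2.1.trans_subset (hYX₀.trans (hX₀ _ hP.1))).ne rfl
    · intro Y hY
      exfalso
      have : (Y : Set α) ∈ C := ⟨Y, hY, rfl⟩
      rw [hCe] at this; exact this
  · have hCchain : IsChain (· ⊆ ·) C := hchain.mono hCB
    have hUC : ⋃₀ C ∈ B := hU C hCI hCne hCchain
    refine ⟨⟨⋃₀ C, hUC⟩, ?_⟩
    apply le_antisymm
    · rintro ⟨Y, hYI⟩ hY
      by_contra hYL
      obtain ⟨P, hP⟩ := hYI
      have hsub : ∀ Z ∈ C, Z ⊆ P := by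
        intro Z hZ
        obtain ⟨z, hzL, rfl⟩ := hZ
        have hzB : (z : Set α) ∈ B := hCB ⟨z, hzL, rfl⟩
        have hzY : ¬ ((Y : Set α) ⊆ (z : Set α)) := by
          intro hle
          exact hYL (L.lower (show (⟨Y, ⟨P, hP⟩⟩ : ↥(ISet B)) ≤ z from hle) hzL)
        have hZY : (z : Set α) ⊂ Y := by
          rcases chain_total hchain hzB hP.2.1 with hs | hs
          · exact hs.ssubset_of_ne (fun he => hzY (le_of_eq he.symm))
          · exact absurd hs hzY
        by_contra hzP
        have hPz : P ⊂ (z : Set α) := by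
          rcases chain_total hchain hP.1 hzB with hs | hs
          · exact hs.ssubset_of_ne (fun he => hzP (le_of_eq he.symm))
          · exact absurd hs hzP
        exact hP.2.2.2 ⟨z, hzB, hPz, hZY⟩
      have hYP : (Y : Set α) ⊆ P :=
        le_trans (mem_phi.mp hY) (Set.sUnion_subset hsub)
      exact (hP.2.2.1.trans_subset hYP).ne rfl
    · intro Y hY
      exact mem_phi.mpr (Set.subset_sUnion_of_mem ⟨Y, hY, rfl⟩)

/-- predecessor map as order iso between ISet and IPSet -/
noncomputable def predIso (hchain : IsChain (· ⊆ ·) B) : ↥(ISet B) ≃o ↥(IPSet B) := by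
  have hf : ∀ Y : ↥(ISet B), ImmNbr B Y.2.choose Y := fun Y => Y.2.choose_spec
  have hg : ∀ X : ↥(IPSet B), ImmNbr B X X.2.choose := fun X => X.2.choose_spec
  refine ⟨⟨fun Y => ⟨Y.2.choose, ⟨Y, hf Y⟩⟩, fun X => ⟨X.2.choose, ⟨X, hg X⟩⟩, ?_, ?_⟩, ?_⟩
  · intro Y
    apply Subtype.ext
    exact succ_unique hchain (hg ⟨Y.2.choose, ⟨Y, hf Y⟩⟩) (hf Y)
  · intro X
    apply Subtype.ext
    exact pred_unique hchain (hf ⟨X.2.choose, ⟨X, hg X⟩⟩) (hg X)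
  · intro Y Y'
    show Y.2.choose ⊆ Y'.2.choose ↔ (Y : Set α) ⊆ (Y' : Set α)
    have hP : ImmNbr B Y.2.choose Y := hf Y
    have hP' : ImmNbr B Y'.2.choose Y' := hf Y'
    constructor
    · intro h
      by_contra hle
      have hss : (Y' : Set α) ⊂ (Y : Set α) := by
        rcases chain_total hchain hP.2.1 hP'.2.1 with hs | hs
        · exact absurd hs hle
        · exact hs.ssubset_of_ne (fun he => hle (le_of_eq he.symm))
      exact hP.2.2.2 ⟨Y', hP'.2.1, lt_of_le_of_lt h hP'.2.2.1, hss⟩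
    · intro h
      by_contra hle
      have hss : Y'.2.choose ⊂ Y.2.choose := by
        rcases chain_total hchain hP.1 hP'.1 with hs | hs
        · exact absurd hs hle
        · exact hs.ssubset_of_ne (fun he => hle (le_of_eq he.symm))
      exact hP'.2.2.2 ⟨Y.2.choose, hP.1, hss, hP.2.2.1.trans_le h⟩

end aux

theorem stmt6 {α : Type*} (B : Set (Set α)) (hchain : IsChain (· ⊆ ·) B)
    (hK2 : K2Sets B)
    (hbot : ∃ X₀ ∈ B, ∀ X ∈ B, X₀ ⊆ X)
    (hU : ∀ C ⊆ ISet B, C.Nonempty → IsChain (· ⊆ ·) C → ⋃₀ C ∈ B) :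
    Nonempty (↥B ≃o LowerSet ↥(ISet B)) ∧ Nonempty (↥B ≃o LowerSet ↥(IPSet B)) := by
  have hiso : ↥B ≃o LowerSet ↥(ISet B) :=
    RelIso.ofSurjective
      (OrderEmbedding.ofMapLEIff (phi B) (fun X X' => phi_le_iff hchain hK2 X X'))
      (phi_surj hchain hbot hU)
  exact ⟨⟨hiso⟩, ⟨hiso.trans (LowerSet.map (predIso hchain))⟩⟩
end

section
/- Let B be a set of subsets of a fixed set that is totally ordered by inclusion and satisfies (K2). Assume that B has a greatest member and that for every nonempty chain C ⊆ IP(B), ⋂_{X ∈ C} X ∈ B. Then B is order-isomorphic to D(IS(B)) and to D(IP(B)). -/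
open Set

section

variable {α : Type*} {B : Set (Set α)} {X X' Y Y' : Set α}

theorem IPSet_subset : IPSet B ⊆ B := fun _ ⟨_, h⟩ => h.1

namespace ImmNbr

theorem subset_of_ssubset (hB : IsChain (· ⊆ ·) B) (h : ImmNbr B X Y) {W : Set α} (hW : W ∈ B)
    (hXW : X ⊂ W) : Y ⊆ W := by
  by_contra hYW
  have hWY : W ⊂ Y := ((hB.total h.2.1 hW).resolve_left hYW).ssubset_of_ne fun he => hYW he.ge
  exact h.2.2.2 ⟨W, hW, hXW, hWY⟩

theorem ssubset_sInter (hB : IsChain (· ⊆ ·) B) (h : ImmNbr B X Y) {U : Set (Set α)}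
    (hU : U ⊆ B) (hXU : ∀ W ∈ U, X ⊂ W) : X ⊂ ⋂₀ U :=
  h.2.2.1.trans_subset <| subset_sInter fun W hW => h.subset_of_ssubset hB (hU hW) (hXU W hW)

theorem subset_iff_subset (hB : IsChain (· ⊆ ·) B) (h : ImmNbr B X Y) (h' : ImmNbr B X' Y') :
    X ⊆ X' ↔ Y ⊆ Y' := by
  constructor
  · intro hXX'
    by_contra hYY'
    have hY'Y : Y' ⊂ Y := ssubset_of_subset_not_subset ((hB.total h.2.1 h'.2.1).resolve_left hYY') hYY'
    exact h.2.2.2 ⟨Y', h'.2.1, hXX'.trans_ssubset h'.2.2.1, hY'Y⟩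
  · intro hYY'
    by_contra hXX'
    have hX'X : X' ⊂ X := ssubset_of_subset_not_subset ((hB.total h.1 h'.1).resolve_left hXX') hXX'
    exact h'.2.2.2 ⟨X, h.1, hX'X, h.2.2.1.trans_subset hYY'⟩

theorem left_unique (hB : IsChain (· ⊆ ·) B) (h : ImmNbr B X Y) (h' : ImmNbr B X' Y) : X = X' :=
  subset_antisymm ((subset_iff_subset hB h h').2 subset_rfl)
    ((subset_iff_subset hB h' h).2 subset_rfl)

theorem right_unique (hB : IsChain (· ⊆ ·) B) (h : ImmNbr B X Y) (h' : ImmNbr B X Y') : Y = Y' :=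
  subset_antisymm ((subset_iff_subset hB h h').1 subset_rfl)
    ((subset_iff_subset hB h' h).1 subset_rfl)

end ImmNbr

/-- Sends `Z` to its immediate successor, which is unique because `B` is a chain. -/
noncomputable def orderIsoIPSetISet (hB : IsChain (· ⊆ ·) B) : IPSet B ≃o ISet B where
  toFun Z := ⟨Z.2.choose, Z, Z.2.choose_spec⟩
  invFun Y := ⟨Y.2.choose, Y, Y.2.choose_spec⟩
  left_inv Z := Subtype.ext <|
    ImmNbr.left_unique hB (Exists.choose_spec (p := (ImmNbr B · _)) _) Z.2.choose_spec
  right_inv Y := Subtype.ext <|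
    ImmNbr.right_unique hB (Exists.choose_spec (p := (ImmNbr B _ ·)) _) Y.2.choose_spec
  map_rel_iff' {Z Z'} := (ImmNbr.subset_iff_subset hB Z.2.choose_spec Z'.2.choose_spec).symm

def ipCut (B : Set (Set α)) (X : Set α) : LowerSet (IPSet B) where
  carrier := {Z | (Z : Set α) ⊂ X}
  lower' _ _ hZW hW := lt_of_le_of_lt (α := Set α) hZW hW

theorem mem_ipCut {Z : IPSet B} : Z ∈ ipCut B X ↔ (Z : Set α) ⊂ X := Iff.rfl

theorem ipCut_mono : Monotone (ipCut B) := fun _ _ hXY _ hZ => hZ.trans_subset hXY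

theorem ipCut_le_ipCut_iff (hB : IsChain (· ⊆ ·) B) (hK2 : K2Sets B) (hX : X ∈ B) (hY : Y ∈ B) :
    ipCut B X ≤ ipCut B Y ↔ X ⊆ Y := by
  refine ⟨fun h => ?_, fun h => ipCut_mono h⟩
  by_contra hXY
  have hYX : Y ⊂ X := ssubset_of_subset_not_subset ((hB.total hY hX).resolve_right hXY) hXY
  obtain ⟨c, d, hcd, hYc, hdX⟩ := hK2 Y hY X hX hYX
  have hc : (⟨c, d, hcd⟩ : IPSet B) ∈ ipCut B X := hcd.2.2.1.trans_subset hdX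
  exact (h hc).not_subset hYc

theorem ipCut_surjective (hB : IsChain (· ⊆ ·) B) (htop : ∃ X₁ ∈ B, ∀ X ∈ B, X ⊆ X₁)
    (hI : ∀ C ⊆ IPSet B, C.Nonempty → IsChain (· ⊆ ·) C → ⋂₀ C ∈ B) (L : LowerSet (IPSet B)) :
    ∃ X ∈ B, ipCut B X = L := by
  by_cases hL : ∀ Z, Z ∈ L
  · obtain ⟨X₁, hX₁, hX₁top⟩ := htop
    refine ⟨X₁, hX₁, SetLike.ext fun Z => iff_of_true ?_ (hL Z)⟩
    obtain ⟨Y, hY⟩ := Z.2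
    exact hY.2.2.1.trans_subset (hX₁top Y hY.2.1)
  push Not at hL
  obtain ⟨Z₀, hZ₀⟩ := hL
  set U : Set (Set α) := {W | ∃ hW : W ∈ IPSet B, ⟨W, hW⟩ ∉ L}
  have hUIP : U ⊆ IPSet B := fun W hW => hW.1
  have hUB : U ⊆ B := hUIP.trans IPSet_subset
  refine ⟨⋂₀ U, hI U hUIP ⟨Z₀, Z₀.2, hZ₀⟩ (hB.mono hUB),
    SetLike.ext fun Z => ⟨fun hZ => ?_, fun hZ => ?_⟩⟩
  · by_contra hZL
    exact (mem_ipCut.1 hZ).not_subset (sInter_subset_of_mem ⟨Z.2, hZL⟩)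
  · obtain ⟨Y, hY⟩ := Z.2
    refine hY.ssubset_sInter hB hUB fun W ⟨hW, hWL⟩ => ?_
    rcases hB.total (IPSet_subset Z.2) (IPSet_subset hW) with hZW | hWZ
    · exact hZW.ssubset_of_ne fun he => hWL ((Subtype.ext he : Z = ⟨W, hW⟩) ▸ hZ)
    · exact absurd (L.lower (show (⟨W, hW⟩ : IPSet B) ≤ Z from hWZ) hZ) hWL

noncomputable def orderIsoLowerSetIPSet (hB : IsChain (· ⊆ ·) B) (hK2 : K2Sets B)
    (htop : ∃ X₁ ∈ B, ∀ X ∈ B, X ⊆ X₁)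
    (hI : ∀ C ⊆ IPSet B, C.Nonempty → IsChain (· ⊆ ·) C → ⋂₀ C ∈ B) :
    B ≃o LowerSet (IPSet B) :=
  OrderIso.ofSurjective
    (OrderEmbedding.ofMapLEIff (fun X : B => ipCut B X) fun X Y =>
      ipCut_le_ipCut_iff hB hK2 X.2 Y.2)
    fun L => let ⟨X, hX, hXL⟩ := ipCut_surjective hB htop hI L; ⟨⟨X, hX⟩, hXL⟩

end

theorem stmt7 {α : Type*} (B : Set (Set α)) (hchain : IsChain (· ⊆ ·) B)
    (hK2 : K2Sets B)
    (htop : ∃ X₁ ∈ B, ∀ X ∈ B, X ⊆ X₁)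
    (hI : ∀ C ⊆ IPSet B, C.Nonempty → IsChain (· ⊆ ·) C → ⋂₀ C ∈ B) :
    Nonempty (↥B ≃o LowerSet ↥(ISet B)) ∧ Nonempty (↥B ≃o LowerSet ↥(IPSet B)) :=
  let e := orderIsoLowerSetIPSet hchain hK2 htop hI
  ⟨⟨e.trans (LowerSet.map (orderIsoIPSetISet hchain))⟩, ⟨e⟩⟩
end

section
/- Let A be a nontrivial commutative ring such that Spec(A) is totally ordered by inclusion and satisfies (K2). Then Spec(A) is order-isomorphic to D(IS(Spec(A))) and to D(IP(Spec(A))). In particular, Spec(A) is order-isomorphic to a Dedekind totally ordered set. -/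
/-- The set of elements of a poset having an immediate predecessor. -/
def ISp (S : Type*) [Preorder S] : Set S :=
  {b | ∃ a, a < b ∧ ¬∃ c, a < c ∧ c < b}

/-- The set of elements of a poset having an immediate successor. -/
def IPp (S : Type*) [Preorder S] : Set S :=
  {a | ∃ b, a < b ∧ ¬∃ c, a < c ∧ c < b}

/-- A poset satisfies (K2) if between any two strictly comparable elements
there exist immediate neighbors. -/
def K2p (S : Type*) [Preorder S] : Prop :=
  ∀ a b : S, a < b → ∃ c d : S, a ≤ c ∧ c < d ∧ d ≤ b ∧ ¬∃ e, c < e ∧ e < d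

section Aux

variable {S : Type*} [PartialOrder S]

lemma aux_lt (htot : ∀ a b : S, a ≤ b ∨ b ≤ a) {a b : S} (h : ¬ b ≤ a) : a < b := by
  rcases htot a b with h1 | h1
  · exact lt_of_le_of_ne h1 (fun he => h (he ▸ le_refl _))
  · exact absurd h1 h

/-- Spec ≃o LowerSet IS. -/
lemma aux_IS (htot : ∀ a b : S, a ≤ b ∨ b ≤ a)
    (hlub : ∀ T : Set S, ∃ x, IsLUB T x) (hK2 : K2p S) :
    Nonempty (S ≃o LowerSet ↥(ISp S)) := by
  classical
  set f : S → LowerSet ↥(ISp S) := fun x =>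
    ⟨{b | (b : S) ≤ x}, fun b b' hle hb => le_trans hle hb⟩ with hf
  have hmono : ∀ {x y : S}, x ≤ y → f x ≤ f y := by
    intro x y hxy
    intro b hb
    exact le_trans hb hxy
  have hrel : ∀ {x y : S}, f x ≤ f y ↔ x ≤ y := by
    intro x y
    constructor
    · intro h
      by_contra hxy
      have hyx : y < x := aux_lt htot hxy
      obtain ⟨c, d, hyc, hcd, hdx, himm⟩ := hK2 y x hyx
      have hd : d ∈ ISp S := ⟨c, hcd, himm⟩
      have : (⟨d, hd⟩ : ↥(ISp S)) ∈ f x := hdx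
      have hdy : d ≤ y := h this
      exact absurd (lt_of_lt_of_le hcd (le_trans hdy hyc)) (lt_irrefl c)
    · exact hmono
  have hsurj : Function.Surjective f := by
    intro U
    obtain ⟨x, hx⟩ := hlub {b : S | ∃ hb : b ∈ ISp S, (⟨b, hb⟩ : ↥(ISp S)) ∈ U}
    refine ⟨x, le_antisymm ?_ ?_⟩
    · rintro ⟨b, hb⟩ hbx
      obtain ⟨a, hab, himm⟩ := hb
      by_contra hbU
      have hub : x ≤ a := by
        apply hx.2
        intro u hu
        obtain ⟨hu1, hu2⟩ := hu
        have hub : ¬ b ≤ u := by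
          intro hbu
          exact hbU (U.lower (show (⟨b, ⟨a, hab, himm⟩⟩ : ↥(ISp S)) ≤ ⟨u, hu1⟩ from hbu) hu2)
        have hub' : u < b := aux_lt htot hub
        by_contra hua
        exact himm ⟨u, aux_lt htot hua, hub'⟩
      exact absurd (lt_of_lt_of_le hab (le_trans hbx hub)) (lt_irrefl a)
    · rintro ⟨b, hb⟩ hbU
      exact hx.1 ⟨hb, hbU⟩
  exact ⟨{ toEquiv := Equiv.ofBijective f ⟨fun a b h => le_antisymm (hrel.mp h.le) (hrel.mp h.ge), hsurj⟩,
           map_rel_iff' := hrel }⟩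

/-- Spec ≃o LowerSet IP. -/
lemma aux_IP (htot : ∀ a b : S, a ≤ b ∨ b ≤ a)
    (hlub : ∀ T : Set S, ∃ x, IsLUB T x) (hK2 : K2p S) :
    Nonempty (S ≃o LowerSet ↥(IPp S)) := by
  classical
  set f : S → LowerSet ↥(IPp S) := fun x =>
    ⟨{a | (a : S) < x}, fun a a' hle ha => lt_of_le_of_lt hle ha⟩ with hf
  have hrel : ∀ {x y : S}, f x ≤ f y ↔ x ≤ y := by
    intro x y
    constructor
    · intro h
      by_contra hxy
      have hyx : y < x := aux_lt htot hxy
      obtain ⟨c, d, hyc, hcd, hdx, himm⟩ := hK2 y x hyx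
      have hc : c ∈ IPp S := ⟨d, hcd, himm⟩
      have : (⟨c, hc⟩ : ↥(IPp S)) ∈ f x := lt_of_lt_of_le hcd hdx
      have hcy : c < y := h this
      exact absurd (lt_of_lt_of_le hcy hyc) (lt_irrefl c)
    · intro hxy a ha
      exact lt_of_lt_of_le ha hxy
  have hsurj : Function.Surjective f := by
    intro U
    obtain ⟨x, hx⟩ := hlub {b : S | ∃ u : ↥(IPp S), u ∈ U ∧ (u : S) < b ∧ ¬∃ e, (u : S) < e ∧ e < b}
    refine ⟨x, le_antisymm ?_ ?_⟩
    · rintro ⟨a, ha⟩ hax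
      obtain ⟨b, hab, himm⟩ := ha
      by_contra haU
      have hub : x ≤ a := by
        apply hx.2
        intro t ht
        obtain ⟨u, huU, hut, himm'⟩ := ht
        have hua : (u : S) < a := by
          apply aux_lt htot
          intro hau
          exact haU (U.lower (show (⟨a, ⟨b, hab, himm⟩⟩ : ↥(IPp S)) ≤ u from hau) huU)
        by_contra hta
        exact himm' ⟨a, hua, aux_lt htot hta⟩
      exact absurd (lt_of_lt_of_le hax hub) (lt_irrefl a)
    · rintro ⟨a, ha⟩ haU
      obtain ⟨b, hab, himm⟩ := ha
      have : b ∈ {b : S | ∃ u : ↥(IPp S), u ∈ U ∧ (u : S) < b ∧ ¬∃ e, (u : S) < e ∧ e < b} :=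
        ⟨⟨a, ⟨b, hab, himm⟩⟩, haU, hab, himm⟩
      exact lt_of_lt_of_le hab (hx.1 this)
  exact ⟨{ toEquiv := Equiv.ofBijective f ⟨fun a b h => le_antisymm (hrel.mp h.le) (hrel.mp h.ge), hsurj⟩,
           map_rel_iff' := hrel }⟩

end Aux

theorem stmt8 (A : Type*) [CommRing A] [Nontrivial A]
    (hchain : ∀ p q : PrimeSpectrum A, p ≤ q ∨ q ≤ p)
    (hK2 : K2p (PrimeSpectrum A)) :
    Nonempty (PrimeSpectrum A ≃o LowerSet ↥(ISp (PrimeSpectrum A))) ∧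
    Nonempty (PrimeSpectrum A ≃o LowerSet ↥(IPp (PrimeSpectrum A))) ∧
    ∃ U : Set (PrimeSpectrum A), IsChain (· ≤ ·) U ∧
      Nonempty (PrimeSpectrum A ≃o LowerSet ↥U) := by
  have hlub : ∀ T : Set (PrimeSpectrum A), ∃ x, IsLUB T x := by
    intro T
    rcases T.eq_empty_or_nonempty with rfl | ⟨p0, hp0⟩
    · -- bottom: intersection of all primes is prime since they form a chain
      set J : Ideal A := ⨅ p : PrimeSpectrum A, p.asIdeal with hJ
      have hmem : ∀ {z : A}, z ∈ J ↔ ∀ p : PrimeSpectrum A, z ∈ p.asIdeal := by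
        intro z; simp [hJ, Ideal.mem_iInf]
      have hprime : J.IsPrime := by
        constructor
        · intro htop
          obtain ⟨p⟩ := (inferInstance : Nonempty (PrimeSpectrum A))
          exact p.isPrime.ne_top (top_le_iff.mp (htop ▸ iInf_le _ p))
        · intro x y hxy
          by_contra hcon
          push_neg at hcon
          obtain ⟨hx, hy⟩ := hcon
          rw [hmem] at hx hy
          push_neg at hx hy
          obtain ⟨p, hxp⟩ := hx
          obtain ⟨q, hyq⟩ := hy
          rcases hchain p q with hpq | hqp
          · have hyp : y ∉ p.asIdeal := fun h => hyq (hpq h)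
            rcases p.isPrime.mem_or_mem (hmem.mp hxy p) with h | h
            · exact hxp h
            · exact hyp h
          · have hxq : x ∉ q.asIdeal := fun h => hxp (hqp h)
            rcases q.isPrime.mem_or_mem (hmem.mp hxy q) with h | h
            · exact hxq h
            · exact hyq h
      refine ⟨⟨J, hprime⟩, ?_, ?_⟩
      · intro p hp; exact absurd hp (Set.notMem_empty p)
      · intro p hp
        show J ≤ p.asIdeal
        exact iInf_le _ p
    · -- union (sSup) of the nonempty chain is prime
      set Sset : Set (Ideal A) := PrimeSpectrum.asIdeal '' T with hS
      have hSne : Sset.Nonempty := ⟨p0.asIdeal, p0, hp0, rfl⟩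
      have hdir : DirectedOn (· ≤ ·) Sset := by
        rintro _ ⟨p, hp, rfl⟩ _ ⟨q, hq, rfl⟩
        rcases hchain p q with h | h
        · exact ⟨q.asIdeal, ⟨q, hq, rfl⟩, h, le_refl _⟩
        · exact ⟨p.asIdeal, ⟨p, hp, rfl⟩, le_refl _, h⟩
      set J : Ideal A := sSup Sset with hJ
      have hmem : ∀ {z : A}, z ∈ J ↔ ∃ I ∈ Sset, z ∈ I := by
        intro z
        exact Submodule.mem_sSup_of_directed hSne hdir
      have hprime : J.IsPrime := by
        constructor
        · intro htop
          have : (1 : A) ∈ J := htop ▸ Submodule.mem_top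
          obtain ⟨_, ⟨p, _, rfl⟩, h1⟩ := hmem.mp this
          exact p.isPrime.ne_top (Ideal.eq_top_of_isUnit_mem _ h1 isUnit_one)
        · intro x y hxy
          obtain ⟨_, ⟨p, hp, rfl⟩, hxyp⟩ := hmem.mp hxy
          rcases p.isPrime.mem_or_mem hxyp with h | h
          · exact Or.inl (hmem.mpr ⟨p.asIdeal, ⟨p, hp, rfl⟩, h⟩)
          · exact Or.inr (hmem.mpr ⟨p.asIdeal, ⟨p, hp, rfl⟩, h⟩)
      refine ⟨⟨J, hprime⟩, ?_, ?_⟩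
      · intro p hp
        show p.asIdeal ≤ J
        exact le_sSup ⟨p, hp, rfl⟩
      · intro q hq
        show J ≤ q.asIdeal
        exact sSup_le (by rintro _ ⟨p, hp, rfl⟩; exact hq hp)
  obtain ⟨e1⟩ := aux_IS hchain hlub hK2
  obtain ⟨e2⟩ := aux_IP hchain hlub hK2
  refine ⟨⟨e1⟩, ⟨e2⟩, ISp (PrimeSpectrum A), ?_, ⟨e1⟩⟩
  intro p _ q _ _
  exact hchain p q
end

section
/- Let H be an isolated subgroup of Γ, let f ∈ H, and let t ∈ T. If f(t) ≠ 0 then H_t ⊆ H. -/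
/-- The carrier of Γ: functions `T → G` with well-ordered support. -/
def Gamma (T G : Type*) [LinearOrder T] [Zero G] [LT G] : Set (T → G) :=
  {f | (Function.support f).IsWF}

/-- The (left-to-right lexicographic) order on functions `T → G`:
`f ≤ g` iff `f = g` or `f` and `g` agree before some point `t` at which `f t < g t`. -/
def lexLE {T G : Type*} [LinearOrder T] [LT G] (f g : T → G) : Prop :=
  f = g ∨ ∃ t, (∀ s, s < t → f s = g s) ∧ f t < g t

/-- `H` is an isolated subgroup of Γ: a subgroup of Γ that is convex for the
lexicographic order. -/
def IsIsolated (T G : Type*) [LinearOrder T] [AddCommGroup G] [LinearOrder G] [IsOrderedAddMonoid G]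
    (H : Set (T → G)) : Prop :=
  H ⊆ Gamma T G ∧ (0 : T → G) ∈ H ∧ (∀ f ∈ H, ∀ g ∈ H, f + g ∈ H) ∧
  (∀ f ∈ H, -f ∈ H) ∧
  ∀ h ∈ H, ∀ g ∈ Gamma T G, lexLE 0 g → lexLE g h → g ∈ H

/-- The T-isolated subgroup `H_t`: elements of Γ vanishing strictly before `t`. -/
def Ht (T G : Type*) [LinearOrder T] [Zero G] [LT G] (t : T) : Set (T → G) :=
  {f ∈ Gamma T G | ∀ s, s < t → f s = 0}

/-- The dual T-isolated subgroup `dH_t`: elements of Γ vanishing at and before `t`. -/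
def dHt (T G : Type*) [LinearOrder T] [Zero G] [LT G] (t : T) : Set (T → G) :=
  {f ∈ Gamma T G | ∀ s, s ≤ t → f s = 0}

/-!
Let `s ≤ t` be the least point of the support of `f`; replacing `f` by `-f` if necessary, `H`
contains an element `F` vanishing before `s` with `F s > 0`. Every `g ≥ 0` vanishing before `s`
lies below some multiple `(n + 1) • F`, because `G` is archimedean, so `g ∈ H` by convexity;
this covers `H_s ⊇ H_t`, the negative elements being handled by `-g`.
-/

section Gamma

variable {T G : Type*} [LinearOrder T]

lemma exists_le_ne_zero_forall_lt_eq_zero_of_mem_Gamma [Zero G] [LT G] {f : T → G}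
    (hf : f ∈ Gamma T G) {t : T} (ht : f t ≠ 0) :
    ∃ s ≤ t, f s ≠ 0 ∧ ∀ r < s, f r = 0 := by
  have hne : (Function.support f).Nonempty := ⟨t, ht⟩
  refine ⟨hf.min hne, hf.min_le hne ht, hf.min_mem hne, fun r hr => ?_⟩
  by_contra hr'
  exact hf.not_lt_min hne hr' hr

lemma lexLE_zero_of_forall_lt_eq_zero [Zero G] [LT G] {f : T → G} {s : T}
    (hf : ∀ r < s, f r = 0) (hs : 0 < f s) : lexLE 0 f :=
  Or.inr ⟨s, fun r hr => (hf r hr).symm, hs⟩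

lemma Ht_subset_Ht [Zero G] [LT G] {s t : T} (hst : s ≤ t) : Ht T G t ⊆ Ht T G s :=
  fun _ hg => ⟨hg.1, fun r hr => hg.2 r (hr.trans_le hst)⟩

lemma neg_mem_Ht [AddGroup G] [LT G] {g : T → G} {t : T} (hg : g ∈ Ht T G t) :
    -g ∈ Ht T G t :=
  ⟨by simpa only [Gamma, Set.mem_ofPred_eq, Function.support_neg] using hg.1,
    fun s hs => by simp [hg.2 s hs]⟩

lemma lexLE_zero_or_lexLE_zero_neg_of_mem_Gamma [AddCommGroup G] [LinearOrder G]
    [IsOrderedAddMonoid G] {g : T → G} (hg : g ∈ Gamma T G) :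
    lexLE 0 g ∨ lexLE 0 (-g) := by
  by_cases hg0 : g = 0
  · exact Or.inl (Or.inl hg0.symm)
  obtain ⟨t, ht⟩ := Function.ne_iff.mp hg0
  obtain ⟨s, -, hs, hlt⟩ := exists_le_ne_zero_forall_lt_eq_zero_of_mem_Gamma hg ht
  rcases hs.lt_or_gt with hneg | hpos
  · exact Or.inr (lexLE_zero_of_forall_lt_eq_zero (fun r hr => by simp [hlt r hr])
      (by simpa using hneg))
  · exact Or.inl (lexLE_zero_of_forall_lt_eq_zero hlt hpos)

end Gamma

namespace IsIsolated

variable {T G : Type*} [LinearOrder T] [AddCommGroup G] [LinearOrder G] [IsOrderedAddMonoid G]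
  {H : Set (T → G)}

lemma nsmul_mem (hH : IsIsolated T G H) {F : T → G} (hF : F ∈ H) (n : ℕ) : n • F ∈ H := by
  induction n with
  | zero => simpa using hH.2.1
  | succ n ih => rw [succ_nsmul]; exact hH.2.2.1 _ ih _ hF

lemma exists_forall_lt_eq_zero_pos (hH : IsIsolated T G H) {f : T → G} (hf : f ∈ H) {t : T}
    (ht : f t ≠ 0) : ∃ s ≤ t, ∃ F ∈ H, (∀ r < s, F r = 0) ∧ 0 < F s := by
  obtain ⟨s, hst, hs, hlt⟩ := exists_le_ne_zero_forall_lt_eq_zero_of_mem_Gamma (hH.1 hf) ht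
  rcases hs.lt_or_gt with hneg | hpos
  · exact ⟨s, hst, -f, hH.2.2.2.1 f hf, fun r hr => by simp [hlt r hr], by simpa using hneg⟩
  · exact ⟨s, hst, f, hf, hlt, hpos⟩

variable [Archimedean G]

lemma mem_of_mem_Ht_of_lexLE_zero (hH : IsIsolated T G H) {F : T → G} (hF : F ∈ H) {s : T}
    (hF0 : ∀ r < s, F r = 0) (hFs : 0 < F s) {g : T → G} (hg : g ∈ Ht T G s)
    (hg0 : lexLE 0 g) : g ∈ H := by
  obtain ⟨n, hn⟩ := Archimedean.arch (g s) hFs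
  have hlt : g s < (n + 1) • F s := by
    rw [succ_nsmul]
    exact hn.trans_lt (lt_add_of_pos_right _ hFs)
  refine hH.2.2.2.2 _ (hH.nsmul_mem hF (n + 1)) g hg.1 hg0 (Or.inr ⟨s, fun r hr => ?_, hlt⟩)
  simp [hg.2 r hr, hF0 r hr]

lemma mem_of_mem_Ht (hH : IsIsolated T G H) {F : T → G} (hF : F ∈ H) {s : T}
    (hF0 : ∀ r < s, F r = 0) (hFs : 0 < F s) {g : T → G} (hg : g ∈ Ht T G s) : g ∈ H := by
  rcases lexLE_zero_or_lexLE_zero_neg_of_mem_Gamma hg.1 with hpos | hneg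
  · exact hH.mem_of_mem_Ht_of_lexLE_zero hF hF0 hFs hg hpos
  · simpa using hH.2.2.2.1 _ (hH.mem_of_mem_Ht_of_lexLE_zero hF hF0 hFs (neg_mem_Ht hg) hneg)

end IsIsolated

theorem stmt9_general {T G : Type*} [LinearOrder T]
    [AddCommGroup G] [LinearOrder G] [IsOrderedAddMonoid G] [Archimedean G]
    (H : Set (T → G)) (hH : IsIsolated T G H)
    {f : T → G} (hf : f ∈ H) {t : T} (hft : f t ≠ 0) :
    Ht T G t ⊆ H := by
  obtain ⟨s, hst, F, hF, hF0, hFs⟩ := hH.exists_forall_lt_eq_zero_pos hf hft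
  exact fun g hg => hH.mem_of_mem_Ht hF hF0 hFs (Ht_subset_Ht hst hg)

theorem stmt9 {T G : Type*} [LinearOrder T] [Nonempty T]
    [AddCommGroup G] [LinearOrder G] [IsOrderedAddMonoid G] [Archimedean G] [Nontrivial G]
    (H : Set (T → G)) (hH : IsIsolated T G H)
    {f : T → G} (hf : f ∈ H) {t : T} (hft : f t ≠ 0) :
    Ht T G t ⊆ H :=
  stmt9_general H hH hf hft
end

section
/- Let T be a linearly ordered set. Then there exists a commutative integral domain A that is a valuation ring such that Spec(A), ordered by inclusion, is order-isomorphic to D(T). -/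
/-!
Take the Hahn series field over `ℚ` with value group `Γ = Lex (T →₀ ℤ)` and its valuation ring `A`
of series of nonnegative order; prime ideals of `A` correspond, inclusion-reversingly, to the
overrings of `A`. For a lower set `L` of `T`, restricting exponents to `L` is a monotone
homomorphism `Γ → Lex (L →₀ ℤ)`, and the valuation ring `A_L` of the coarsened valuation contains
the monomial `X_t⁻¹` exactly when `t ∉ L`. Conversely, an overring `S` is closed upwards in order,
so it equals `A_L` for `L = {t | X_t⁻¹ ∉ S}`: an element whose order is negative with leading index
`m ∉ L` dominates a power of `X_m⁻¹`, while if `m ∈ L` its square is dominated by `X_m⁻¹`.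
-/

namespace HahnSeries

variable {Γ Γ' R : Type*} [AddCommGroup Γ] [LinearOrder Γ] [IsOrderedAddMonoid Γ]
  [AddCommGroup Γ'] [LinearOrder Γ'] [IsOrderedAddMonoid Γ'] [Field R]

theorem order_inv {x : HahnSeries Γ R} (hx : x ≠ 0) : x⁻¹.order = -x.order := by
  have h := order_mul hx (inv_ne_zero hx)
  rw [mul_inv_cancel₀ hx, order_one] at h
  exact eq_neg_of_add_eq_zero_right h.symm

/-- The valuation ring of the coarsened valuation `φ ∘ order`; `0` belongs to it through the
convention `order 0 = 0`. -/
def coarsening (φ : Γ →+ Γ') (hφ : Monotone φ) : ValuationSubring (HahnSeries Γ R) where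
  carrier := {x | 0 ≤ φ x.order}
  zero_mem' := by simp
  one_mem' := by simp
  add_mem' {x y} hx hy := by
    rcases eq_or_ne (x + y) 0 with h | h
    · simp [h]
    · calc 0 ≤ min (φ x.order) (φ y.order) := le_min hx hy
        _ = φ (min x.order y.order) := hφ.map_min.symm
        _ ≤ φ (x + y).order := hφ (min_order_le_order_add h)
  neg_mem' := by simp
  mul_mem' {x y} hx hy := by
    rcases eq_or_ne x 0 with rfl | hx0
    · simp
    rcases eq_or_ne y 0 with rfl | hy0
    · simp
    simpa [order_mul hx0 hy0] using add_nonneg hx hy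
  mem_or_inv_mem' x := by
    rcases eq_or_ne x 0 with rfl | hx0
    · simp
    rcases le_total 0 (φ x.order) with h | h
    · exact Or.inl h
    · right
      simpa [order_inv hx0] using h

theorem mem_coarsening {φ : Γ →+ Γ'} {hφ : Monotone φ} {x : HahnSeries Γ R} :
    x ∈ coarsening φ hφ ↔ 0 ≤ φ x.order :=
  Iff.rfl

variable (Γ R) in
def nonnegOrderSubring : ValuationSubring (HahnSeries Γ R) :=
  coarsening (AddMonoidHom.id Γ) monotone_id

theorem mem_nonnegOrderSubring {x : HahnSeries Γ R} :
    x ∈ nonnegOrderSubring Γ R ↔ 0 ≤ x.order :=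
  Iff.rfl

theorem nonnegOrderSubring_le_coarsening (φ : Γ →+ Γ') (hφ : Monotone φ) :
    nonnegOrderSubring Γ R ≤ coarsening φ hφ :=
  fun _ hx => mem_coarsening.mpr (by simpa using hφ (mem_nonnegOrderSubring.mp hx))

theorem mem_of_order_le {S : ValuationSubring (HahnSeries Γ R)} (hS : nonnegOrderSubring Γ R ≤ S)
    {x y : HahnSeries Γ R} (hx0 : x ≠ 0) (hxS : x ∈ S) (hxy : x.order ≤ y.order) : y ∈ S := by
  rcases eq_or_ne y 0 with rfl | hy0
  · exact S.zero_mem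
  set z := x⁻¹ * y
  have hz0 : z ≠ 0 := mul_ne_zero (inv_ne_zero hx0) hy0
  have hxz : x * z = y := by rw [← mul_assoc, mul_inv_cancel₀ hx0, one_mul]
  have hzA : z ∈ nonnegOrderSubring Γ R := by
    rw [mem_nonnegOrderSubring]
    have hyz := order_mul hx0 hz0
    rw [hxz] at hyz
    rw [hyz] at hxy
    simpa using hxy
  exact hxz ▸ mul_mem hxS (hS hzA)

end HahnSeries

namespace Finsupp

variable {T N : Type*}

noncomputable def lexRestrict [AddMonoid N] (L : Set T) : Lex (T →₀ N) →+ Lex (L →₀ N) where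
  toFun g := toLex ((ofLex g).subtypeDomain (· ∈ L))
  map_zero' := by simp
  map_add' g h := by simp

variable [LinearOrder T]

theorem lex_neg_iff [Zero N] [LT N] {g : Lex (T →₀ N)} :
    g < 0 ↔ ∃ j, (∀ i < j, ofLex g i = 0) ∧ ofLex g j < 0 :=
  Lex.lt_iff

theorem lexRestrict_neg_iff [AddMonoid N] [LT N] {L : Set T} (hL : IsLowerSet L)
    {g : Lex (T →₀ N)} :
    lexRestrict L g < 0 ↔ ∃ j ∈ L, (∀ i < j, ofLex g i = 0) ∧ ofLex g j < 0 := by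
  rw [lex_neg_iff]
  constructor
  · rintro ⟨⟨j, hj⟩, hlt, hneg⟩
    exact ⟨j, hj, fun i hi => hlt ⟨i, hL hi.le hj⟩ hi, hneg⟩
  · rintro ⟨j, hj, hlt, hneg⟩
    exact ⟨⟨j, hj⟩, fun i hi => hlt i hi, hneg⟩

theorem lexRestrict_monotone [AddCommGroup N] [LinearOrder N] [IsOrderedAddMonoid N] {L : Set T}
    (hL : IsLowerSet L) : Monotone (lexRestrict (N := N) L) := by
  refine (monotone_iff_map_nonneg _).mpr fun g hg => not_lt.mp fun hneg => ?_
  obtain ⟨j, -, hlt, hj⟩ := (lexRestrict_neg_iff hL).mp hneg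
  exact hg.not_gt (lex_neg_iff.mpr ⟨j, hlt, hj⟩)

end Finsupp

open HahnSeries Finsupp

section LowerSetSubring

variable {T : Type*} [LinearOrder T] (R : Type*) [Field R]

noncomputable def lowerSetSubring (L : LowerSet T) :
    ValuationSubring (HahnSeries (Lex (T →₀ ℤ)) R) :=
  coarsening (lexRestrict (L : Set T)) (lexRestrict_monotone L.lower)

noncomputable def invVar (t : T) : HahnSeries (Lex (T →₀ ℤ)) R :=
  HahnSeries.single (toLex (-Finsupp.single t 1)) 1

theorem invVar_ne_zero (t : T) : invVar R t ≠ 0 := single_ne_zero one_ne_zero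

theorem order_invVar (t : T) : (invVar R t).order = toLex (-Finsupp.single t 1) :=
  order_single one_ne_zero

theorem order_invVar_strictMono : StrictMono fun t : T => (invVar R t).order := by
  intro t t' h
  simp only [order_invVar]
  refine Lex.lt_iff.mpr ⟨t, fun i hi => ?_, ?_⟩
  · simp [single_eq_of_ne hi.ne, single_eq_of_ne (hi.trans h).ne]
  · simp [single_eq_of_ne h.ne]

theorem order_invVar_pow (t : T) (n : ℕ) :
    (invVar R t ^ n).order = toLex (-Finsupp.single t (n : ℤ)) := by
  rw [order_pow, order_invVar]
  change toLex (n • -Finsupp.single t (1 : ℤ)) = _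
  simp

variable {R}

theorem invVar_mem_lowerSetSubring_iff {L : LowerSet T} {t : T} :
    invVar R t ∈ lowerSetSubring R L ↔ t ∉ L := by
  rw [lowerSetSubring, mem_coarsening, ← not_lt, order_invVar,
    lexRestrict_neg_iff L.lower, not_iff_not]
  constructor
  · rintro ⟨j, hj, -, hneg⟩
    obtain rfl : t = j := by
      by_contra h
      simp [single_eq_of_ne (Ne.symm h)] at hneg
    exact hj
  · intro ht
    refine ⟨t, ht, fun i hi => ?_, by simp⟩
    simp [single_eq_of_ne hi.ne]

theorem lowerSetSubring_le_iff {L L' : LowerSet T} :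
    lowerSetSubring R L' ≤ lowerSetSubring R L ↔ L ≤ L' := by
  constructor
  · intro h t ht
    by_contra ht'
    exact invVar_mem_lowerSetSubring_iff.mp (h (invVar_mem_lowerSetSubring_iff.mpr ht')) ht
  · intro h x hx
    simp only [lowerSetSubring, mem_coarsening, ← not_lt, lexRestrict_neg_iff L.lower,
      lexRestrict_neg_iff L'.lower] at hx ⊢
    exact fun ⟨j, hj, hj'⟩ => hx ⟨j, h hj, hj'⟩

end LowerSetSubring

section Overring

variable {T R : Type*} [LinearOrder T] [Field R]
  {S : ValuationSubring (HahnSeries (Lex (T →₀ ℤ)) R)}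

def lowerSetOfOverring (hS : nonnegOrderSubring _ R ≤ S) : LowerSet T where
  carrier := {t | invVar R t ∉ S}
  lower' _ _ h ht hmem :=
    ht (mem_of_order_le hS (invVar_ne_zero R _) hmem ((order_invVar_strictMono R).monotone h))

theorem mem_of_mem_lowerSetSubring (hS : nonnegOrderSubring _ R ≤ S)
    {x : HahnSeries (Lex (T →₀ ℤ)) R} (hx : x ∈ lowerSetSubring R (lowerSetOfOverring hS)) :
    x ∈ S := by
  rcases le_or_gt 0 x.order with hx0 | hneg
  · exact hS hx0
  obtain ⟨m, hbelow, hm⟩ := lex_neg_iff.mp hneg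
  have hmS : invVar R m ∈ S := by
    by_contra hm'
    exact not_lt.mpr hx
      ((lexRestrict_neg_iff (lowerSetOfOverring hS).lower).mpr ⟨m, hm', hbelow, hm⟩)
  set n := (-ofLex x.order m).toNat + 1
  refine mem_of_order_le hS (pow_ne_zero n (invVar_ne_zero R m)) (pow_mem hmS n) (le_of_lt ?_)
  rw [order_invVar_pow]
  refine Lex.lt_iff.mpr ⟨m, fun i hi => ?_, ?_⟩
  · simp [single_eq_of_ne hi.ne, hbelow i hi]
  · simp only [toLex_neg, ofLex_neg, ofLex_toLex, coe_neg, Pi.neg_apply, single_eq_same]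
    omega

theorem mem_lowerSetSubring_of_mem (hS : nonnegOrderSubring _ R ≤ S)
    {x : HahnSeries (Lex (T →₀ ℤ)) R} (hx : x ∈ S) :
    x ∈ lowerSetSubring R (lowerSetOfOverring hS) := by
  rw [lowerSetSubring, mem_coarsening, ← not_lt, lexRestrict_neg_iff (lowerSetOfOverring hS).lower]
  rintro ⟨j, hj, hbelow, hneg⟩
  have hx0 : x ≠ 0 := by
    rintro rfl
    simp at hneg
  apply hj
  refine mem_of_order_le hS (mul_ne_zero hx0 hx0) (mul_mem hx hx) (le_of_lt ?_)
  rw [order_mul hx0 hx0, order_invVar]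
  refine Lex.lt_iff.mpr ⟨j, fun i hi => ?_, ?_⟩
  · simp [single_eq_of_ne hi.ne, hbelow i hi]
  · simp only [ofLex_add, coe_add, Pi.add_apply, toLex_neg, ofLex_neg, ofLex_toLex, coe_neg,
      Pi.neg_apply, single_eq_same]
    omega

theorem lowerSetSubring_lowerSetOfOverring (hS : nonnegOrderSubring _ R ≤ S) :
    lowerSetSubring R (lowerSetOfOverring hS) = S :=
  le_antisymm (fun _ => mem_of_mem_lowerSetSubring hS) (fun _ => mem_lowerSetSubring_of_mem hS)

noncomputable def lowerSetOrderIsoOverring :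
    LowerSet T ≃o {S : ValuationSubring (HahnSeries (Lex (T →₀ ℤ)) R) //
      nonnegOrderSubring _ R ≤ S}ᵒᵈ :=
  OrderIso.ofSurjective
    (OrderEmbedding.ofMapLEIff
      (fun L => OrderDual.toDual ⟨lowerSetSubring R L, nonnegOrderSubring_le_coarsening _ _⟩)
      fun _ _ => lowerSetSubring_le_iff)
    fun S => ⟨lowerSetOfOverring S.ofDual.2,
      congrArg OrderDual.toDual (Subtype.ext (lowerSetSubring_lowerSetOfOverring _))⟩

noncomputable def primeSpectrumOrderIsoLowerSet :
    PrimeSpectrum (nonnegOrderSubring (Lex (T →₀ ℤ)) R) ≃o LowerSet T :=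
  (OrderIso.dualDual _).trans
    ((ValuationSubring.primeSpectrumOrderEquiv _).dual.trans lowerSetOrderIsoOverring.symm)

end Overring

universe u

theorem stmt14 (T : Type u) [LinearOrder T] :
    ∃ (A : Type u) (_ : CommRing A) (_ : IsDomain A),
      ValuationRing A ∧ Nonempty (PrimeSpectrum A ≃o LowerSet T) :=
  ⟨nonnegOrderSubring (Lex (T →₀ ℤ)) ℚ, inferInstance, inferInstance, inferInstance,
    ⟨primeSpectrumOrderIsoLowerSet⟩⟩
end

section
/- Let A be a nontrivial commutative ring such that Spec(A) is totally ordered by inclusion, and endow IP(Spec(A)) with the subspace topology induced from the Zariski topology on Spec(A). Then a subset of IP(Spec(A)) is closed in this subspace topology if and only if it is a final (upper) subset of IP(Spec(A)) with respect to inclusion. -/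
theorem stmt16 (A : Type*) [CommRing A] [Nontrivial A]
    (hchain : ∀ p q : PrimeSpectrum A, p ≤ q ∨ q ≤ p)
    (K : Set ↥(IPp (PrimeSpectrum A))) :
    IsClosed K ↔ IsUpperSet K := by
  constructor
  · intro hK x y hxy hx
    rw [isClosed_induced_iff] at hK
    obtain ⟨C, hC, rfl⟩ := hK
    exact hC.stableUnderSpecialization
      ((PrimeSpectrum.le_iff_specializes x.1 y.1).mp hxy) hx
  · intro hK
    rw [← isOpen_compl_iff, isOpen_induced_iff]
    refine ⟨⋃ (a : ↥(IPp (PrimeSpectrum A))) (_ : a ∉ K),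
      (PrimeSpectrum.zeroLocus ((Classical.choose a.2).asIdeal : Set A))ᶜ, ?_, ?_⟩
    · exact isOpen_iUnion fun a => isOpen_iUnion fun _ =>
        (PrimeSpectrum.isClosed_zeroLocus _).isOpen_compl
    · ext x
      simp only [Set.mem_preimage, Set.mem_iUnion, Set.mem_compl_iff,
        PrimeSpectrum.mem_zeroLocus, SetLike.coe_subset_coe]
      constructor
      · rintro ⟨a, haK, hx⟩ hxK
        obtain ⟨hab, hno⟩ := Classical.choose_spec a.2
        set b := Classical.choose a.2
        -- hx : ¬ b.asIdeal ≤ x.val.asIdeal, i.e. ¬ b ≤ x.val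
        have hxb : x.1 < b := by
          rcases hchain x.1 b with h | h
          · exact lt_of_le_of_ne h (fun he => hx (by rw [he]))
          · exact absurd h hx
        have hxa : x.1 ≤ a.1 := by
          rcases hchain x.1 a.1 with h | h
          · exact h
          · rcases lt_or_eq_of_le h with h' | h'
            · exact absurd ⟨x.1, h', hxb⟩ hno
            · exact le_of_eq h'.symm
        exact haK (hK (show x ≤ a from hxa) hxK)
      · intro hxK
        refine ⟨x, hxK, ?_⟩
        obtain ⟨hab, -⟩ := Classical.choose_spec x.2
        exact fun h => absurd (le_antisymm hab.le h) hab.ne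
end

section
/- Let A be a nontrivial commutative ring such that Spec(A) is totally ordered by inclusion and satisfies (K2). Then there is a bijection between the points of Spec(A) and the collection of closed subsets of IP(Spec(A)), where IP(Spec(A)) carries the subspace topology induced from the Zariski topology on Spec(A). -/
theorem stmt17 (A : Type*) [CommRing A] [Nontrivial A]
    (hchain : ∀ p q : PrimeSpectrum A, p ≤ q ∨ q ≤ p)
    (hK2 : K2p (PrimeSpectrum A)) :
    Nonempty (PrimeSpectrum A ≃ {K : Set ↥(IPp (PrimeSpectrum A)) // IsClosed K}) := by
  classical
  obtain ⟨m, hm⟩ := Ideal.exists_maximal A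
  set M : PrimeSpectrum A := ⟨m, hm.isPrime⟩ with hM
  have hMtop : ∀ p : PrimeSpectrum A, M ≤ p → p = M := by
    intro p hp
    exact PrimeSpectrum.ext (hm.eq_of_le p.2.ne_top hp).symm
  have hMnotIP : M ∉ IPp (PrimeSpectrum A) := by
    rintro ⟨b, hb, -⟩
    exact hb.ne' (hMtop b hb.le)
  let f : PrimeSpectrum A → {K : Set ↥(IPp (PrimeSpectrum A)) // IsClosed K} :=
    fun p => ⟨Subtype.val ⁻¹' (PrimeSpectrum.zeroLocus (p.asIdeal : Set A)),
      (PrimeSpectrum.isClosed_zeroLocus _).preimage continuous_subtype_val⟩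
  have hf : ∀ p (a : ↥(IPp (PrimeSpectrum A))), a ∈ (f p).1 ↔ p ≤ a.1 := by
    intro p a
    simp only [f, Set.mem_preimage, PrimeSpectrum.mem_zeroLocus]
    exact ⟨fun h x hx => h hx, fun h x hx => h hx⟩
  have hflt : ∀ p q : PrimeSpectrum A, p < q → f p ≠ f q := by
    intro p q hlt hpq
    obtain ⟨c, d, hpc, hcd, hdq, hno⟩ := hK2 p q hlt
    have hcIP : c ∈ IPp (PrimeSpectrum A) := ⟨d, hcd, hno⟩
    have h1 : (⟨c, hcIP⟩ : ↥(IPp (PrimeSpectrum A))) ∈ (f p).1 := (hf p _).2 hpc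
    rw [hpq] at h1
    have h2 : q ≤ c := (hf q _).1 h1
    exact lt_irrefl q (lt_of_le_of_lt h2 (lt_of_lt_of_le hcd hdq))
  refine ⟨Equiv.ofBijective f ⟨?_, ?_⟩⟩
  · intro p q hpq
    by_contra hne
    rcases hchain p q with h | h
    · exact hflt p q (lt_of_le_of_ne h hne) hpq
    · exact hflt q p (lt_of_le_of_ne h (Ne.symm hne)) hpq.symm
  · rintro ⟨K, hK⟩
    obtain ⟨C, hC, rfl⟩ := isClosed_induced_iff.1 hK
    obtain ⟨I, rfl⟩ := (PrimeSpectrum.isClosed_iff_zeroLocus_ideal C).1 hC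
    by_cases hemp :
        (Subtype.val ⁻¹' PrimeSpectrum.zeroLocus (I : Set A) : Set ↥(IPp (PrimeSpectrum A))) = ∅
    · refine ⟨M, Subtype.ext ?_⟩
      ext a
      constructor
      · intro ha
        have : M ≤ a.1 := (hf M a).1 ha
        exact absurd ((hMtop a.1 this) ▸ a.2) hMnotIP
      · intro ha
        exact absurd ha (Set.eq_empty_iff_forall_notMem.1 hemp a)
    · obtain ⟨a₀, ha₀⟩ := Set.nonempty_iff_ne_empty.2 hemp
      -- a₀ : IP, a₀.1 ∈ zeroLocus I
      have ha₀' : (a₀ : PrimeSpectrum A) ∈ PrimeSpectrum.zeroLocus (I : Set A) := ha₀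
      set Q : Ideal A :=
        ⨅ p : (PrimeSpectrum.zeroLocus (I : Set A)), (p : PrimeSpectrum A).asIdeal with hQ
      have hQle : ∀ p : PrimeSpectrum A, p ∈ PrimeSpectrum.zeroLocus (I : Set A) →
          Q ≤ p.asIdeal := fun p hp => iInf_le _ (⟨p, hp⟩ : (PrimeSpectrum.zeroLocus (I : Set A)))
      have hIQ : I ≤ Q := le_iInf fun p => p.2
      have hQprime : Q.IsPrime := by
        constructor
        · intro htop
          exact (a₀ : PrimeSpectrum A).2.ne_top
            (top_le_iff.1 (htop ▸ hQle _ ha₀'))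
        · intro x y hxy
          by_contra hcon
          push_neg at hcon
          obtain ⟨hx, hy⟩ := hcon
          have hx' : ∃ p : PrimeSpectrum A, p ∈ PrimeSpectrum.zeroLocus (I : Set A) ∧
              x ∉ p.asIdeal := by
            by_contra h
            push_neg at h
            exact hx (Submodule.mem_iInf _ |>.2 fun p => h p p.2)
          have hy' : ∃ p : PrimeSpectrum A, p ∈ PrimeSpectrum.zeroLocus (I : Set A) ∧
              y ∉ p.asIdeal := by
            by_contra h
            push_neg at h
            exact hy (Submodule.mem_iInf _ |>.2 fun p => h p p.2)
          obtain ⟨pa, hpa, hxa⟩ := hx'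
          obtain ⟨pb, hpb, hyb⟩ := hy'
          rcases hchain pa pb with h | h
          · rcases pa.2.mem_or_mem (hQle pa hpa hxy) with h' | h'
            · exact hxa h'
            · exact hyb (h h')
          · rcases pb.2.mem_or_mem (hQle pb hpb hxy) with h' | h'
            · exact hxa (h h')
            · exact hyb h'
      refine ⟨⟨Q, hQprime⟩, Subtype.ext ?_⟩
      ext a
      rw [hf]
      constructor
      · intro h
        exact Set.mem_preimage.2 (PrimeSpectrum.mem_zeroLocus _ _ |>.2
          (fun x hx => h (hIQ hx)))
      · intro h
        exact hQle a.1 h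
end

section
/- Let A be a nontrivial commutative ring such that Spec(A) is totally ordered by inclusion, satisfies (K2), and has more than one point. Then IP(Spec(A)) is dense in Spec(A) with respect to the Zariski topology. -/
theorem stmt18 (A : Type*) [CommRing A] [Nontrivial A]
    (hchain : ∀ p q : PrimeSpectrum A, p ≤ q ∨ q ≤ p)
    (hK2 : K2p (PrimeSpectrum A))
    (htwo : ∃ p q : PrimeSpectrum A, p ≠ q) :
    Dense (IPp (PrimeSpectrum A)) := by
  rw [dense_iff_inter_open]
  intro U hU ⟨r, hrU⟩
  -- reduce to a basic open
  obtain ⟨V, ⟨f, rfl⟩, hrV, hVU⟩ :=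
    PrimeSpectrum.isTopologicalBasis_basic_opens.exists_subset_of_mem_open hrU hU
  by_cases hV : ∃ p : PrimeSpectrum A, f ∈ p.asIdeal
  · obtain ⟨p0, hp0⟩ := hV
    obtain ⟨q, hq, hqp0⟩ := Ideal.exists_minimalPrimes_le
      ((Ideal.span_singleton_le_iff_mem p0.asIdeal).mpr hp0)
    haveI := hq.1.1
    set m : PrimeSpectrum A := ⟨q, hq.1.1⟩ with hm
    have hrm : r < m := by
      rcases hchain r m with h | h
      · refine lt_of_le_of_ne h ?_
        rintro rfl
        exact hrV (hq.1.2 (Ideal.mem_span_singleton_self f))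
      · exact absurd (h (hq.1.2 (Ideal.mem_span_singleton_self f))) hrV
    obtain ⟨c, d, hrc, hcd, hdm, himm⟩ := hK2 r m hrm
    refine ⟨c, hVU ?_, d, hcd, himm⟩
    intro hfc
    have hmc : m ≤ c := by
      rcases hchain m c with h | h
      · exact h
      · exact hq.2 ⟨c.isPrime, (Ideal.span_singleton_le_iff_mem c.asIdeal).mpr hfc⟩ h
    exact absurd ((hcd.trans_le hdm).trans_le hmc) (lt_irrefl c)
  · push_neg at hV
    obtain ⟨p, q, hpq⟩ := htwo
    have hlt : p < q ∨ q < p := by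
      rcases hchain p q with h | h
      · exact Or.inl (lt_of_le_of_ne h hpq)
      · exact Or.inr (lt_of_le_of_ne h hpq.symm)
    rcases hlt with h | h
    · obtain ⟨c, d, _, hcd, _, himm⟩ := hK2 p q h
      exact ⟨c, hVU (hV c), d, hcd, himm⟩
    · obtain ⟨c, d, _, hcd, _, himm⟩ := hK2 q p h
      exact ⟨c, hVU (hV c), d, hcd, himm⟩
end

section
/- Let T be a linearly ordered set and consider D(T), realized as the set of all lower subsets of T ordered by inclusion. Then a lower set of T has an immediate predecessor in D(T) if and only if it equals {x ∈ T | x ≤ a} for some a ∈ T, and it has an immediate successor in D(T) if and only if it equals {x ∈ T | x < a} for some a ∈ T; consequently, the maps a ↦ {x | x ≤ a} and a ↦ {x | x < a} are order isomorphisms from T onto IS(D(T)) and onto IP(D(T)), respectively. -/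
section aux

variable {T : Type*} [LinearOrder T]

lemma iio_lt_iic (a : T) : LowerSet.Iio a < LowerSet.Iic a := by
  rw [← LowerSet.coe_ssubset_coe, LowerSet.coe_Iio, LowerSet.coe_Iic]
  exact ⟨Set.Iio_subset_Iic_self, fun h => absurd (h (le_refl a)) (lt_irrefl a)⟩

lemma no_between (a : T) : ¬∃ C : LowerSet T, LowerSet.Iio a < C ∧ C < LowerSet.Iic a := by
  rintro ⟨C, h1, h2⟩
  obtain ⟨x, hxC, hx⟩ := Set.not_subset.1 (fun h => h1.not_ge (by exact h : (C : Set T) ⊆ _))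
  have hxa : x = a := le_antisymm (h2.le hxC) (not_lt.1 (by simpa using hx))
  refine h2.not_ge fun y hy => ?_
  rcases lt_or_eq_of_le (LowerSet.mem_Iic_iff.1 hy) with h | h
  · exact h1.le h
  · exact h ▸ hxa ▸ hxC

lemma isp_iff (L : LowerSet T) : L ∈ ISp (LowerSet T) ↔ ∃ a : T, L = LowerSet.Iic a := by
  constructor
  · rintro ⟨A, hAL, hno⟩
    obtain ⟨x, hxL, hxA⟩ := Set.not_subset.1 (fun h => hAL.not_ge (by exact h : (L : Set T) ⊆ _))
    refine ⟨x, ?_⟩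
    have hB : A ⊔ LowerSet.Iio x = A := by
      by_contra hne
      have hle : A ≤ A ⊔ LowerSet.Iio x := le_sup_left
      have hlt : A < A ⊔ LowerSet.Iio x := lt_of_le_of_ne hle (Ne.symm hne)
      have hltL : A ⊔ LowerSet.Iio x < L := by
        refine lt_of_le_of_ne (sup_le hAL.le fun y hy => L.lower (le_of_lt hy) hxL) ?_
        intro h
        have : x ∈ A ⊔ LowerSet.Iio x := h ▸ hxL
        rcases this with h | h
        · exact hxA h
        · exact lt_irrefl x h
      exact hno ⟨_, hlt, hltL⟩
    have hIio : LowerSet.Iio x ≤ A := by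
      intro y hy; rw [← hB]; exact Or.inr hy
    have hAIic : A ≤ LowerSet.Iic x := by
      intro y hy
      by_contra hyx
      exact hxA (A.lower (le_of_lt (not_le.1 (by simpa using hyx))) hy)
    have hlt2 : A < A ⊔ LowerSet.Iic x := by
      refine lt_of_le_of_ne le_sup_left fun h => ?_
      have : x ∈ A ⊔ LowerSet.Iic x := Or.inr (le_refl x)
      exact hxA (h ▸ this)
    have hle2 : A ⊔ LowerSet.Iic x ≤ L :=
      sup_le hAL.le fun y hy => L.lower (LowerSet.mem_Iic_iff.1 hy) hxL
    have hEq : A ⊔ LowerSet.Iic x = L := by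
      by_contra hne
      exact hno ⟨_, hlt2, lt_of_le_of_ne hle2 hne⟩
    rw [← hEq, sup_eq_right.2 hAIic]
  · rintro ⟨a, rfl⟩
    exact ⟨LowerSet.Iio a, iio_lt_iic a, no_between a⟩

lemma ipp_iff (L : LowerSet T) : L ∈ IPp (LowerSet T) ↔ ∃ a : T, L = LowerSet.Iio a := by
  constructor
  · rintro ⟨B, hLB, hno⟩
    obtain ⟨x, hxB, hxL⟩ := Set.not_subset.1 (fun h => hLB.not_ge (by exact h : (B : Set T) ⊆ _))
    refine ⟨x, ?_⟩
    have hC : L ⊔ LowerSet.Iio x = L := by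
      by_contra hne
      have hlt : L < L ⊔ LowerSet.Iio x := lt_of_le_of_ne le_sup_left (Ne.symm hne)
      have hltB : L ⊔ LowerSet.Iio x < B := by
        refine lt_of_le_of_ne (sup_le hLB.le fun y hy => B.lower (le_of_lt hy) hxB) ?_
        intro h
        have : x ∈ L ⊔ LowerSet.Iio x := h ▸ hxB
        rcases this with h | h
        · exact hxL h
        · exact lt_irrefl x h
      exact hno ⟨_, hlt, hltB⟩
    have hIio : LowerSet.Iio x ≤ L := fun y hy => by rw [← hC]; exact Or.inr hy
    have hLIio : L ≤ LowerSet.Iio x := by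
      intro y hy
      by_contra hyx
      exact hxL (L.lower (not_lt.1 (by simpa using hyx)) hy)
    exact le_antisymm hLIio hIio
  · rintro ⟨a, rfl⟩
    exact ⟨LowerSet.Iic a, iio_lt_iic a, no_between a⟩

end aux

theorem stmt19 (T : Type*) [LinearOrder T] :
    (∀ L : LowerSet T, L ∈ ISp (LowerSet T) ↔ ∃ a : T, L = LowerSet.Iic a) ∧
    (∀ L : LowerSet T, L ∈ IPp (LowerSet T) ↔ ∃ a : T, L = LowerSet.Iio a) ∧
    (∃ e : T ≃o ↥(ISp (LowerSet T)), ∀ a : T, ((e a : LowerSet T) : Set T) = {x | x ≤ a}) ∧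
    (∃ e : T ≃o ↥(IPp (LowerSet T)), ∀ a : T, ((e a : LowerSet T) : Set T) = {x | x < a}) := by
  refine ⟨isp_iff, ipp_iff, ?_, ?_⟩
  · have hmono : StrictMono (fun a : T => (⟨LowerSet.Iic a, (isp_iff _).2 ⟨a, rfl⟩⟩ : ↥(ISp (LowerSet T)))) := by
      intro a b hab
      rw [Subtype.mk_lt_mk, ← LowerSet.coe_ssubset_coe, LowerSet.coe_Iic, LowerSet.coe_Iic]
      exact ⟨Set.Iic_subset_Iic.2 hab.le, fun h => absurd (Set.Iic_subset_Iic.1 h) (not_le.2 hab)⟩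
    have hsurj : Function.Surjective (fun a : T => (⟨LowerSet.Iic a, (isp_iff _).2 ⟨a, rfl⟩⟩ : ↥(ISp (LowerSet T)))) := by
      rintro ⟨L, hL⟩
      obtain ⟨a, rfl⟩ := (isp_iff L).1 hL
      exact ⟨a, rfl⟩
    exact ⟨hmono.orderIsoOfSurjective _ hsurj, fun a => LowerSet.coe_Iic a⟩
  · have hmono : StrictMono (fun a : T => (⟨LowerSet.Iio a, (ipp_iff _).2 ⟨a, rfl⟩⟩ : ↥(IPp (LowerSet T)))) := by
      intro a b hab
      rw [Subtype.mk_lt_mk, ← LowerSet.coe_ssubset_coe, LowerSet.coe_Iio, LowerSet.coe_Iio]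
      exact ⟨Set.Iio_subset_Iio hab.le, fun h => absurd (Set.Iio_subset_Iio_iff.1 h) (not_le.2 hab)⟩
    have hsurj : Function.Surjective (fun a : T => (⟨LowerSet.Iio a, (ipp_iff _).2 ⟨a, rfl⟩⟩ : ↥(IPp (LowerSet T)))) := by
      rintro ⟨L, hL⟩
      obtain ⟨a, rfl⟩ := (ipp_iff L).1 hL
      exact ⟨a, rfl⟩
    exact ⟨hmono.orderIsoOfSurjective _ hsurj, fun a => LowerSet.coe_Iio a⟩
end
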